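/- arXiv:2012.02392 — 6 statements merged into one kernel-verified Lean document; each statement's English description precedes it below -/
import Mathlib

section
/- For a Poisson random variable X with mean μ > 0 and positive integers k ≤ q, the falling factorial moment of the truncated variable X_q = min(X, q) satisfies E[X_q(X_q-1)···(X_q-k+1)] = μ^k · P(X ≤ q-k) + q(q-1)···(q-k+1) · P(X ≥ q+1). -/
open scoped BigOperators

/-- The Poisson probability mass function with real mean parameter `μ`:
`P(X = n) = exp(-μ) * μ^n / n!`. -/
noncomputable def poissonPMF (μ : ℝ) (n : ℕ) : ℝ := Real.exp (-μ) * μ ^ n / n.factorial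

/-!
Below `q` the truncation does nothing, and `n!/(n-k)! · μⁿ/n! = μᵏ · μⁿ⁻ᵏ/(n-k)!` turns the
partial `k`-th factorial moment into `μᵏ P(X ≤ q - k)`. Above `q` the variable is frozen at `q`,
which contributes `q(q-1)⋯(q-k+1) P(X ≥ q+1)`.
-/

open Finset

theorem summable_poissonPMF (μ : ℝ) : Summable (poissonPMF μ) := by
  exact ((Real.summable_pow_div_factorial μ).mul_left (Real.exp (-μ))).congr fun n =>
    (mul_div_assoc _ _ _).symm

theorem poissonPMF_add_mul_descFactorial (μ : ℝ) (k i : ℕ) :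
    poissonPMF μ (k + i) * ((k + i).descFactorial k : ℝ) = μ ^ k * poissonPMF μ i := by
  have hfact : (i.factorial : ℝ) * (k + i).descFactorial k = (k + i).factorial := by
    exact_mod_cast Nat.add_sub_cancel_left k i ▸ Nat.factorial_mul_descFactorial (k.le_add_right i)
  have hi : (i.factorial : ℝ) ≠ 0 := by positivity
  have hki : ((k + i).factorial : ℝ) ≠ 0 := by positivity
  unfold poissonPMF
  rw [pow_add]
  field_simp
  linear_combination (μ ^ k * μ ^ i) * hfact

theorem sum_range_mul_descFactorial {R : Type*} [CommSemiring R] (f : ℕ → R) (k m : ℕ) :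
    ∑ n ∈ range (k + m), f n * (n.descFactorial k : R) =
      ∑ i ∈ range m, f (k + i) * ((k + i).descFactorial k : R) := by
  rw [sum_range_add, sum_eq_zero fun n hn => by
    rw [Nat.descFactorial_of_lt (mem_range.mp hn), Nat.cast_zero, mul_zero], zero_add]

theorem sum_range_poissonPMF_mul_descFactorial (μ : ℝ) {q k : ℕ} (hkq : k ≤ q) :
    ∑ n ∈ range (q + 1), poissonPMF μ n * (n.descFactorial k : ℝ) =
      μ ^ k * ∑ n ∈ range (q - k + 1), poissonPMF μ n := by
  rw [show q + 1 = k + (q - k + 1) by omega, sum_range_mul_descFactorial, mul_sum]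
  exact sum_congr rfl fun i _ => poissonPMF_add_mul_descFactorial μ k i

theorem tsum_ite_le_eq_tsum_nat_add {f : ℕ → ℝ} (hf : Summable f) (m : ℕ) :
    (∑' n, if m ≤ n then f n else 0) = ∑' i, f (i + m) := by
  have hsum : Summable fun n => if m ≤ n then f n else 0 :=
    (summable_nat_add_iff m).mp <| ((summable_nat_add_iff m).mpr hf).congr fun i => by simp
  rw [← hsum.sum_add_tsum_nat_add m, sum_eq_zero fun n hn => if_neg (by simpa using hn),
    zero_add]
  simp

theorem stmt0_general (μ : ℝ) (q k : ℕ) (hkq : k ≤ q) :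
    (∑' n : ℕ, poissonPMF μ n * ((min n q).descFactorial k : ℝ)) =
      μ ^ k * (∑ n ∈ Finset.range (q - k + 1), poissonPMF μ n) +
        (q.descFactorial k : ℝ) * (∑' n : ℕ, if q + 1 ≤ n then poissonPMF μ n else 0) := by
  have htail : ∀ i, poissonPMF μ (i + (q + 1)) * ((min (i + (q + 1)) q).descFactorial k : ℝ) =
      (q.descFactorial k : ℝ) * poissonPMF μ (i + (q + 1)) := fun i => by
    rw [min_eq_right (by omega), mul_comm]
  have hsum : Summable fun n => poissonPMF μ n * ((min n q).descFactorial k : ℝ) :=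
    (summable_nat_add_iff (q + 1)).mp <| by
      simpa only [htail] using
        ((summable_nat_add_iff (q + 1)).mpr (summable_poissonPMF μ)).mul_left _
  rw [← hsum.sum_add_tsum_nat_add (q + 1), tsum_congr htail, tsum_mul_left,
    tsum_ite_le_eq_tsum_nat_add (summable_poissonPMF μ),
    ← sum_range_poissonPMF_mul_descFactorial μ hkq]
  congr 1
  exact sum_congr rfl fun n hn => by rw [min_eq_left (Nat.lt_succ_iff.mp (mem_range.mp hn))]

/-- For `X ~ Poisson(μ)` and positive integers `k ≤ q`, the `k`-th falling factorial
moment of the truncated variable `X_q = min(X, q)` satisfies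
`E[X_q (X_q - 1) ⋯ (X_q - k + 1)] = μ^k ⬝ P(X ≤ q - k) + q (q-1) ⋯ (q-k+1) ⬝ P(X ≥ q+1)`. -/
theorem stmt0 (μ : ℝ) (hμ : 0 < μ) (q k : ℕ) (hk : 1 ≤ k) (hkq : k ≤ q) :
    (∑' n : ℕ, poissonPMF μ n * ((min n q).descFactorial k : ℝ)) =
      μ ^ k * (∑ n ∈ Finset.range (q - k + 1), poissonPMF μ n) +
        (q.descFactorial k : ℝ) * (∑' n : ℕ, if q + 1 ≤ n then poissonPMF μ n else 0) :=
  stmt0_general μ q k hkq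
end

section
/- For a Poisson random variable X with mean μ > 0, a positive integer k ≤ q, and V_{q-k+1} a Gamma(q-k+1, 1) random variable, the falling factorial moment of the truncated variable satisfies E[X_q(X_q-1)···(X_q-k+1)] = E[min(V_{q-k+1}^k, μ^k)]. -/
/-!
Write `q = n + k` and `p_m(t) = e^{-t} t^m / m!`. The density of `Gamma(n + 1, 1)` is `p_n`,
and since `d/dt P(Poisson(t) ≤ n) = -p_n(t)`, the Gamma tail `∫_μ^∞ p_n` equals
`P(Poisson(μ) ≤ n)`. Splitting the Gamma integral at `μ` and using
`v^k p_n(v) = q^{(k)} p_q(v)` gives `q^{(k)} P(X > q) + μ^k P(X ≤ n)`. On the Poisson side,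
`j^{(k)} p_j(μ) = μ^k p_{j-k}(μ)` turns the terms with `X ≤ q` into `μ^k P(X ≤ n)`, while
the event `X > q` contributes `q^{(k)} P(X > q)`.
-/

open ProbabilityTheory

/-- The Poisson probability mass function with real mean parameter `μ`. -/
noncomputable def poissonPMF' (μ : ℝ) (n : ℕ) : ℝ := Real.exp (-μ) * μ ^ n / n.factorial

open MeasureTheory Real Set Filter Topology

noncomputable def poissonCDF' (μ : ℝ) (n : ℕ) : ℝ :=
  ∑ m ∈ Finset.range (n + 1), poissonPMF' μ m

lemma hasSum_poissonPMF' (μ : ℝ) : HasSum (poissonPMF' μ) 1 := by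
  convert! (NormedSpace.expSeries_div_hasSum_exp μ).mul_left (exp (-μ)) using 1
  · funext n
    simp only [poissonPMF', mul_div_assoc]
  · simp [← exp_eq_exp_ℝ, ← exp_add]

lemma poissonPMF'_add_mul_descFactorial (μ : ℝ) (m k : ℕ) :
    poissonPMF' μ (m + k) * (m + k).descFactorial k = μ ^ k * poissonPMF' μ m := by
  have hfac : ((m + k).factorial : ℝ) = m.factorial * (m + k).descFactorial k := by
    exact_mod_cast (Nat.add_sub_cancel m k ▸
      Nat.factorial_mul_descFactorial (Nat.le_add_left k m)).symm
  have hm : (m.factorial : ℝ) ≠ 0 := by positivity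
  have hd : ((m + k).descFactorial k : ℝ) ≠ 0 := by
    exact_mod_cast (Nat.descFactorial_pos.mpr (Nat.le_add_left k m)).ne'
  simp only [poissonPMF', hfac, pow_add]
  field_simp

lemma continuous_poissonPMF' (n : ℕ) : Continuous (fun t => poissonPMF' t n) := by
  unfold poissonPMF'
  fun_prop

lemma hasDerivAt_poissonPMF'_succ (n : ℕ) (t : ℝ) :
    HasDerivAt (fun t => poissonPMF' t (n + 1)) (poissonPMF' t n - poissonPMF' t (n + 1)) t := by
  refine ((((hasDerivAt_neg t).exp).fun_mul (hasDerivAt_pow (n + 1) t)).div_const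
    ((n + 1).factorial : ℝ)).congr_deriv ?_
  simp only [poissonPMF', Nat.factorial_succ, Nat.cast_mul, Nat.add_sub_cancel, pow_succ]
  field_simp
  ring

lemma hasDerivAt_poissonCDF' (n : ℕ) (t : ℝ) :
    HasDerivAt (fun t => poissonCDF' t n) (-poissonPMF' t n) t := by
  induction n with
  | zero =>
    simpa [poissonCDF', poissonPMF'] using (hasDerivAt_neg t).exp
  | succ n ih =>
    simp only [poissonCDF', Finset.sum_range_succ _ (n + 1)] at ih ⊢
    exact (ih.fun_add (hasDerivAt_poissonPMF'_succ n t)).congr_deriv (by ring)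

lemma poissonCDF'_zero_left (n : ℕ) : poissonCDF' 0 n = 1 := by
  rw [poissonCDF', Finset.sum_eq_single 0] <;> simp_all [poissonPMF']

lemma tendsto_poissonCDF'_atTop (n : ℕ) : Tendsto (fun t => poissonCDF' t n) atTop (𝓝 0) := by
  rw [← Finset.sum_const_zero (s := Finset.range (n + 1))]
  refine tendsto_finsetSum _ fun m _ => ?_
  simpa [poissonPMF', mul_comm] using (tendsto_pow_mul_exp_neg_atTop_nhds_zero m).div_const
    (m.factorial : ℝ)

lemma hasDerivAt_neg_poissonCDF' (n : ℕ) (t : ℝ) :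
    HasDerivAt (fun t => -poissonCDF' t n) (poissonPMF' t n) t :=
  (hasDerivAt_poissonCDF' n t).fun_neg.congr_deriv (neg_neg _)

lemma integrableOn_Ioi_poissonPMF' {μ : ℝ} (hμ : 0 ≤ μ) (n : ℕ) :
    IntegrableOn (fun t => poissonPMF' t n) (Ioi μ) :=
  integrableOn_Ioi_deriv_of_nonneg' (fun t _ => hasDerivAt_neg_poissonCDF' n t)
    (fun t ht => by unfold poissonPMF'; have : 0 ≤ t := hμ.trans ht.out.le; positivity)
    (tendsto_poissonCDF'_atTop n).neg

lemma integral_Ioi_poissonPMF' {μ : ℝ} (hμ : 0 ≤ μ) (n : ℕ) :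
    ∫ t in Ioi μ, poissonPMF' t n = poissonCDF' μ n := by
  rw [integral_Ioi_of_hasDerivAt_of_tendsto' (fun t _ => hasDerivAt_neg_poissonCDF' n t)
    (integrableOn_Ioi_poissonPMF' hμ n) (tendsto_poissonCDF'_atTop n).neg]
  ring

lemma intervalIntegral_poissonPMF' (μ : ℝ) (n : ℕ) :
    ∫ t in (0 : ℝ)..μ, poissonPMF' t n = 1 - poissonCDF' μ n := by
  rw [intervalIntegral.integral_eq_sub_of_hasDerivAt (fun t _ => hasDerivAt_neg_poissonCDF' n t)
    ((continuous_poissonPMF' n).intervalIntegrable 0 μ), poissonCDF'_zero_left]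
  ring

lemma tsum_poissonPMF'_mul_min (μ : ℝ) (g : ℕ → ℝ) (q : ℕ) :
    ∑' n, poissonPMF' μ n * g (min n q) =
      ∑ j ∈ Finset.range (q + 1), poissonPMF' μ j * g j + (1 - poissonCDF' μ q) * g q := by
  have htail : HasSum (fun n => poissonPMF' μ (n + (q + 1))) (1 - poissonCDF' μ q) :=
    (hasSum_nat_add_iff' (q + 1)).mpr (hasSum_poissonPMF' μ)
  have hsum : HasSum (fun n => poissonPMF' μ n * g (min n q))
      (∑ j ∈ Finset.range (q + 1), poissonPMF' μ j * g j + (1 - poissonCDF' μ q) * g q) := by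
    rw [← hasSum_nat_add_iff' (q + 1)]
    have hhead : ∑ j ∈ Finset.range (q + 1), poissonPMF' μ j * g (min j q) =
        ∑ j ∈ Finset.range (q + 1), poissonPMF' μ j * g j :=
      Finset.sum_congr rfl fun j hj => by
        rw [min_eq_left (Nat.lt_succ_iff.mp (Finset.mem_range.mp hj))]
    have htail_eq : (fun n => poissonPMF' μ (n + (q + 1)) * g (min (n + (q + 1)) q)) =
        fun n => poissonPMF' μ (n + (q + 1)) * g q :=
      funext fun n => by rw [min_eq_right (by omega)]
    rw [hhead, add_sub_cancel_left, htail_eq]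
    exact htail.mul_right (g q)
  exact hsum.tsum_eq

lemma sum_range_poissonPMF'_mul_descFactorial (μ : ℝ) (n k : ℕ) :
    ∑ j ∈ Finset.range (n + k + 1), poissonPMF' μ j * j.descFactorial k =
      μ ^ k * poissonCDF' μ n := by
  rw [show n + k + 1 = k + (n + 1) by ring, Finset.sum_range_add, poissonCDF', Finset.mul_sum]
  have hlow : ∑ j ∈ Finset.range k, poissonPMF' μ j * j.descFactorial k = 0 :=
    Finset.sum_eq_zero fun j hj => by
      rw [Nat.descFactorial_of_lt (Finset.mem_range.mp hj), Nat.cast_zero, mul_zero]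
  rw [hlow, zero_add]
  exact Finset.sum_congr rfl fun m _ => by rw [add_comm k m, poissonPMF'_add_mul_descFactorial]

lemma integral_gammaMeasure_eq_integral_smul {E : Type*} [NormedAddCommGroup E]
    [NormedSpace ℝ E] {a r : ℝ} (ha : 0 < a) (hr : 0 < r) (f : ℝ → E) :
    ∫ x, f x ∂gammaMeasure a r = ∫ x, gammaPDFReal a r x • f x := by
  rw [gammaMeasure, integral_withDensity_eq_integral_toReal_smul (f := gammaPDF a r)
    (measurable_gammaPDFReal a r).ennreal_ofReal (ae_of_all _ fun _ => ENNReal.ofReal_lt_top)]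
  simp only [gammaPDF, ENNReal.toReal_ofReal (gammaPDFReal_nonneg ha hr _)]

lemma gammaPDFReal_natCast_add_one_one {x : ℝ} (hx : 0 ≤ x) (n : ℕ) :
    gammaPDFReal (n + 1) 1 x = poissonPMF' x n := by
  rw [gammaPDFReal, if_pos hx, one_rpow, add_sub_cancel_right, rpow_natCast,
    Gamma_nat_eq_factorial, poissonPMF', one_mul]
  ring

lemma integral_gammaMeasure_natCast_add_one (n : ℕ) (g : ℝ → ℝ) :
    ∫ v, g v ∂gammaMeasure (n + 1) 1 = ∫ v in Ioi 0, poissonPMF' v n * g v := by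
  rw [integral_gammaMeasure_eq_integral_smul (by positivity) one_pos,
    ← setIntegral_eq_integral_of_forall_compl_eq_zero (s := Ici 0), integral_Ici_eq_integral_Ioi]
  · exact setIntegral_congr_fun measurableSet_Ioi fun v hv => by
      rw [smul_eq_mul, gammaPDFReal_natCast_add_one_one (le_of_lt hv)]
  · intro v hv
    rw [gammaPDFReal, if_neg (show ¬0 ≤ v from hv), zero_smul]

lemma integral_gammaMeasure_min_pow {μ : ℝ} (hμ : 0 ≤ μ) (n k : ℕ) :
    ∫ v, min (v ^ k) (μ ^ k) ∂gammaMeasure (n + 1) 1 =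
      (n + k).descFactorial k * (1 - poissonCDF' μ (n + k)) + μ ^ k * poissonCDF' μ n := by
  have hlow : ∀ v ∈ uIcc 0 μ, poissonPMF' v n * min (v ^ k) (μ ^ k) =
      (n + k).descFactorial k * poissonPMF' v (n + k) := fun v hv => by
    rw [uIcc_of_le hμ] at hv
    rw [min_eq_left (pow_le_pow_left₀ hv.1 hv.2 k), mul_comm _ (poissonPMF' v _),
      poissonPMF'_add_mul_descFactorial, mul_comm]
  have hhigh :
      ∀ v ∈ Ioi μ, poissonPMF' v n * min (v ^ k) (μ ^ k) = μ ^ k * poissonPMF' v n :=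
    fun v hv => by rw [min_eq_right (pow_le_pow_left₀ hμ (le_of_lt hv) k), mul_comm]
  have hint_low :
      IntervalIntegrable (fun v => poissonPMF' v n * min (v ^ k) (μ ^ k)) volume 0 μ :=
    ((continuous_poissonPMF' n).mul (by fun_prop)).intervalIntegrable 0 μ
  have hint_high : IntegrableOn (fun v => poissonPMF' v n * min (v ^ k) (μ ^ k)) (Ioi μ) :=
    IntegrableOn.congr_fun ((integrableOn_Ioi_poissonPMF' hμ n).const_mul (μ ^ k))
      (fun v hv => (hhigh v hv).symm) measurableSet_Ioi
  rw [integral_gammaMeasure_natCast_add_one,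
    ← intervalIntegral.integral_interval_add_Ioi' hint_low hint_high,
    intervalIntegral.integral_congr hlow, setIntegral_congr_fun measurableSet_Ioi hhigh,
    intervalIntegral.integral_const_mul, integral_const_mul, intervalIntegral_poissonPMF',
    integral_Ioi_poissonPMF' hμ]

theorem stmt2_general (μ : ℝ) (hμ : 0 < μ) (q k : ℕ) (hkq : k ≤ q) :
    (∑' n : ℕ, poissonPMF' μ n * ((min n q).descFactorial k : ℝ)) =
      ∫ v, min (v ^ k) (μ ^ k) ∂(gammaMeasure ((q : ℝ) - k + 1) 1) := by
  obtain ⟨n, rfl⟩ := Nat.exists_eq_add_of_le' hkq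
  have hshape : ((n + k : ℕ) : ℝ) - k + 1 = n + 1 := by push_cast; ring
  rw [hshape, integral_gammaMeasure_min_pow hμ.le,
    tsum_poissonPMF'_mul_min (g := fun j => (j.descFactorial k : ℝ)),
    sum_range_poissonPMF'_mul_descFactorial]
  ring

/-- For `X ~ Poisson(μ)` with `μ > 0`, positive integers `k ≤ q`, and
`V_{q-k+1} ~ Gamma(q-k+1, 1)`, the `k`-th falling factorial moment of `X_q = min(X,q)`
satisfies `E[X_q (X_q - 1) ⋯ (X_q - k + 1)] = E[min(V_{q-k+1}^k, μ^k)]`. -/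
theorem stmt2 (μ : ℝ) (hμ : 0 < μ) (q k : ℕ) (hk : 1 ≤ k) (hkq : k ≤ q) :
    (∑' n : ℕ, poissonPMF' μ n * ((min n q).descFactorial k : ℝ)) =
      ∫ v, min (v ^ k) (μ ^ k) ∂(gammaMeasure ((q : ℝ) - k + 1) 1) :=
  stmt2_general μ hμ q k hkq
end

section
/- For a Poisson random variable X with mean μ > 0 and any positive integer q, the strict inequality (E[X_q])² > E[X_q(X_q-1)] holds, where X_q = min(X, q). -/
open Finset

section Poisson

variable {μ : ℝ}

lemma poissonPMF_nonneg (hμ : 0 ≤ μ) (n : ℕ) : 0 ≤ poissonPMF μ n := by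
  unfold poissonPMF; positivity

lemma poissonPMF_pos (hμ : 0 < μ) (n : ℕ) : 0 < poissonPMF μ n := by
  unfold poissonPMF; positivity

lemma succ_mul_poissonPMF_succ (μ : ℝ) (n : ℕ) :
    ((n : ℝ) + 1) * poissonPMF μ (n + 1) = μ * poissonPMF μ n := by
  unfold poissonPMF
  rw [Nat.factorial_succ]
  push_cast
  field_simp
  ring

lemma hasSum_poissonPMF (hμ : 0 ≤ μ) : HasSum (poissonPMF μ) 1 := by
  have h := ProbabilityTheory.hasSum_one_poissonMeasure μ.toNNReal
  rw [Real.coe_toNNReal _ hμ] at h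
  exact h

lemma summable_poissonPMF_mul_of_abs_le (hμ : 0 ≤ μ) {f : ℕ → ℝ} {C : ℝ} (hf : ∀ n, |f n| ≤ C) :
    Summable fun n ↦ poissonPMF μ n * f n :=
  ((hasSum_poissonPMF hμ).summable.mul_right C).of_norm_bounded fun n ↦ by
    rw [Real.norm_eq_abs, abs_mul, abs_of_nonneg (poissonPMF_nonneg hμ n)]
    exact mul_le_mul_of_nonneg_left (hf n) (poissonPMF_nonneg hμ n)

/-- The Stein–Chen identity `E[X f(X)] = μ E[f(X + 1)]`. -/
lemma HasSum.natCast_mul_poissonPMF_mul {f : ℕ → ℝ} {s : ℝ}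
    (h : HasSum (fun n ↦ poissonPMF μ n * f (n + 1)) s) :
    HasSum (fun n : ℕ ↦ n * poissonPMF μ n * f n) (μ * s) := by
  rw [← hasSum_nat_add_iff' 1, sum_range_one, Nat.cast_zero, zero_mul, zero_mul, sub_zero]
  refine (h.mul_left μ).congr_fun fun n ↦ ?_
  push_cast
  rw [succ_mul_poissonPMF_succ]
  ring

lemma hasSum_natCast_mul_poissonPMF (hμ : 0 ≤ μ) :
    HasSum (fun n : ℕ ↦ n * poissonPMF μ n) μ := by
  simpa using ((hasSum_poissonPMF hμ).mul_right 1).natCast_mul_poissonPMF_mul (f := fun _ ↦ 1)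

lemma sum_range_succ_natCast_mul_poissonPMF (μ : ℝ) (q : ℕ) :
    ∑ n ∈ range (q + 1), (n : ℝ) * poissonPMF μ n = μ * ∑ n ∈ range q, poissonPMF μ n := by
  rw [sum_range_succ', mul_sum]
  push_cast
  simp [succ_mul_poissonPMF_succ]

end Poisson

section Truncation

variable {μ : ℝ}

lemma natCast_min_succ (n q : ℕ) :
    min ((n + 1 : ℕ) : ℝ) q = min (n : ℝ) q + if n < q then 1 else 0 := by
  rw [← Nat.cast_min, ← Nat.cast_min]
  split_ifs with h
  · rw [Nat.min_eq_left h, Nat.min_eq_left h.le]; push_cast; ring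
  · rw [Nat.min_eq_right (by omega), Nat.min_eq_right (by omega)]; ring

lemma natCast_mul_min (n q : ℕ) :
    (n : ℝ) * (min n q : ℝ) =
      ((min n q).descFactorial 2 : ℝ) + (min n q : ℝ) + q * (n - (min n q : ℝ)) := by
  rcases le_total n q with h | h
  · rw [Nat.min_eq_left h, min_eq_left (by exact_mod_cast h), Nat.cast_descFactorial_two]; ring
  · rw [Nat.min_eq_right h, min_eq_right (by exact_mod_cast h), Nat.cast_descFactorial_two]; ring

lemma summable_poissonPMF_mul_min (hμ : 0 ≤ μ) (q : ℕ) :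
    Summable fun n : ℕ ↦ poissonPMF μ n * (min n q : ℝ) :=
  summable_poissonPMF_mul_of_abs_le hμ fun n ↦ by
    rw [abs_of_nonneg (by positivity)]
    exact min_le_right _ _

lemma summable_poissonPMF_mul_descFactorial_two_min (hμ : 0 ≤ μ) (q : ℕ) :
    Summable fun n : ℕ ↦ poissonPMF μ n * ((min n q).descFactorial 2 : ℝ) :=
  summable_poissonPMF_mul_of_abs_le hμ (C := q ^ 2) fun n ↦ by
    rw [abs_of_nonneg (by positivity)]
    exact_mod_cast (Nat.descFactorial_le_pow _ _).trans (Nat.pow_le_pow_left (min_le_right n q) 2)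

lemma hasSum_poissonPMF_mul_ite_lt (μ : ℝ) (q : ℕ) :
    HasSum (fun n ↦ poissonPMF μ n * if n < q then 1 else 0) (∑ n ∈ range q, poissonPMF μ n) := by
  convert hasSum_sum_of_ne_finset_zero (s := range q) (L := .unconditional ℕ) fun n hn ↦ ?_ using 1
  · exact sum_congr rfl fun n hn ↦ by simp [mem_range.1 hn]
  · simp [not_lt.1 (mem_range.not.1 hn)]

lemma hasSum_natCast_mul_poissonPMF_mul_min {A : ℝ} {q : ℕ}
    (hA : HasSum (fun n : ℕ ↦ poissonPMF μ n * (min n q : ℝ)) A) :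
    HasSum (fun n : ℕ ↦ n * poissonPMF μ n * (min n q : ℝ))
      (μ * (A + ∑ n ∈ range q, poissonPMF μ n)) :=
  HasSum.natCast_mul_poissonPMF_mul <| (hA.add (hasSum_poissonPMF_mul_ite_lt μ q)).congr_fun
    fun n ↦ by rw [natCast_min_succ, mul_add]

lemma hasSum_poissonPMF_mul_descFactorial_two_min {A : ℝ} (hμ : 0 ≤ μ) {q : ℕ}
    (hA : HasSum (fun n : ℕ ↦ poissonPMF μ n * (min n q : ℝ)) A) :
    HasSum (fun n : ℕ ↦ poissonPMF μ n * ((min n q).descFactorial 2 : ℝ))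
      (μ * (A + ∑ n ∈ range q, poissonPMF μ n) - A - q * (μ - A)) := by
  obtain ⟨B, hB⟩ := summable_poissonPMF_mul_descFactorial_two_min hμ q
  have hsplit : HasSum (fun n : ℕ ↦ n * poissonPMF μ n * (min n q : ℝ)) (B + A + q * (μ - A)) :=
    ((hB.add hA).add (((hasSum_natCast_mul_poissonPMF hμ).sub hA).mul_left (q : ℝ))).congr_fun
      fun n ↦ by rw [mul_right_comm, natCast_mul_min]; ring
  rw [(hasSum_natCast_mul_poissonPMF_mul_min hA).unique hsplit]
  convert hB using 1
  ring

lemma tsum_poissonPMF_mul_min_le_natCast (hμ : 0 ≤ μ) (q : ℕ) :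
    ∑' n : ℕ, poissonPMF μ n * (min n q : ℝ) ≤ q := by
  have hq := (hasSum_poissonPMF hμ).mul_right (q : ℝ)
  rw [one_mul] at hq
  exact hasSum_le (fun n ↦ mul_le_mul_of_nonneg_left (min_le_right _ _) (poissonPMF_nonneg hμ n))
    (summable_poissonPMF_mul_min hμ q).hasSum hq

lemma tsum_poissonPMF_mul_min_le (hμ : 0 ≤ μ) (q : ℕ) :
    ∑' n : ℕ, poissonPMF μ n * (min n q : ℝ) ≤ μ :=
  hasSum_le (fun n ↦ by
      rw [mul_comm (n : ℝ)]
      exact mul_le_mul_of_nonneg_left (min_le_left _ _) (poissonPMF_nonneg hμ n))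
    (summable_poissonPMF_mul_min hμ q).hasSum (hasSum_natCast_mul_poissonPMF hμ)

lemma mul_sum_range_poissonPMF_lt_tsum_poissonPMF_mul_min (hμ : 0 < μ) {q : ℕ} (hq : 0 < q) :
    μ * ∑ n ∈ range q, poissonPMF μ n < ∑' n : ℕ, poissonPMF μ n * (min n q : ℝ) := by
  have hle : HasSum (fun n : ℕ ↦ if n ≤ q then n * poissonPMF μ n else 0)
      (μ * ∑ n ∈ range q, poissonPMF μ n) := by
    rw [← sum_range_succ_natCast_mul_poissonPMF]
    convert hasSum_sum_of_ne_finset_zero (s := range (q + 1)) (L := .unconditional ℕ)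
      fun n hn ↦ ?_ using 1
    · exact sum_congr rfl fun n hn ↦ by simp [Nat.lt_succ_iff.1 (mem_range.1 hn)]
    · simp [Nat.lt_succ_iff.not.1 (mem_range.not.1 hn)]
  refine hasSum_lt (i := q + 1) (fun n ↦ ?_) ?_ hle (summable_poissonPMF_mul_min hμ.le q).hasSum
  · dsimp only
    split_ifs with h
    · rw [min_eq_left (by exact_mod_cast h), mul_comm]
    · exact mul_nonneg (poissonPMF_nonneg hμ.le n) (by positivity)
  · simp only [show ¬ q + 1 ≤ q by omega, if_false]
    rw [min_eq_right (by norm_cast; omega)]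
    exact mul_pos (poissonPMF_pos hμ _) (by exact_mod_cast hq)

end Truncation

/-- For `X ~ Poisson(μ)` with `μ > 0` and any positive integer `q`,
`(E[X_q])² > E[X_q (X_q - 1)]`, where `X_q = min(X, q)`. -/
theorem stmt5 (μ : ℝ) (hμ : 0 < μ) (q : ℕ) (hq : 1 ≤ q) :
    (∑' n : ℕ, poissonPMF μ n * (min n q : ℝ)) ^ 2 >
      ∑' n : ℕ, poissonPMF μ n * ((min n q).descFactorial 2 : ℝ) := by
  set A := ∑' n : ℕ, poissonPMF μ n * (min n q : ℝ)
  have hA : HasSum (fun n : ℕ ↦ poissonPMF μ n * (min n q : ℝ)) A :=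
    (summable_poissonPMF_mul_min hμ.le q).hasSum
  rw [(hasSum_poissonPMF_mul_descFactorial_two_min hμ.le hA).tsum_eq]
  have hAq : A ≤ q := tsum_poissonPMF_mul_min_le_natCast hμ.le q
  have hAμ : A ≤ μ := tsum_poissonPMF_mul_min_le hμ.le q
  have hCA := mul_sum_range_poissonPMF_lt_tsum_poissonPMF_mul_min hμ hq
  nlinarith [mul_nonneg (sub_nonneg.2 hAμ) (sub_nonneg.2 hAq)]
end

section
/- Let N(t) be a Poisson process with rate λ > 0. Then the process W(t) - N(t)²/(2λ) + N(t)/(2λ), where W(t) = ∫₀ᵗ N(u) du, is a martingale with respect to the natural filtration of N. -/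
open MeasureTheory ProbabilityTheory
open scoped NNReal

/-- A Poisson (counting) process with rate `lam`, indexed by nonnegative real times:
`N 0 = 0`, paths are monotone and right-continuous (piecewise constant between jumps),
increments are independent, and the increment over `[s, t]` is Poisson with mean
`lam * (t - s)`. -/
structure PoissonProcess (Ω : Type*) [MeasurableSpace Ω] (P : Measure Ω) (lam : ℝ≥0) where
  N : ℝ≥0 → Ω → ℕ
  measurable_N : ∀ t, Measurable (N t)
  init : ∀ ω, N 0 ω = 0
  mono : ∀ ω, Monotone fun t => N t ω
  right_continuous : ∀ ω t, ∃ ε : ℝ≥0, 0 < ε ∧ ∀ s ∈ Set.Ico t (t + ε), N s ω = N t ω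
  stationary : ∀ s t : ℝ≥0, s ≤ t →
    P.map (fun ω => N t ω - N s ω) = poissonMeasure (lam * (t - s))
  indep : ∀ (n : ℕ) (t : ℕ → ℝ≥0), Monotone t →
    iIndepFun
      (fun i : Fin n => fun ω => N (t (i + 1)) ω - N (t i) ω) P

/-- The natural filtration generated by a Poisson process
(the σ-field generated by `{N s, s ∈ [0, t]}`). -/
noncomputable def PoissonProcess.filtration {Ω : Type*} [m : MeasurableSpace Ω]
    {P : Measure Ω} {lam : ℝ≥0} (pp : PoissonProcess Ω P lam) :
    Filtration ℝ≥0 m :=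
  MeasureTheory.Filtration.natural pp.N fun t => (pp.measurable_N t).stronglyMeasurable

/-- The pathwise cumulative waiting `W(t) = ∫₀ᵗ N(u) du`. -/
noncomputable def PoissonProcess.W {Ω : Type*} [MeasurableSpace Ω]
    {P : Measure Ω} {lam : ℝ≥0} (pp : PoissonProcess Ω P lam) (t : ℝ≥0) (ω : Ω) : ℝ :=
  ∫ u in Set.Ioc (0 : ℝ) (t : ℝ), (pp.N u.toNNReal ω : ℝ)

/-!
Write `D = N t - N s` and `Y = ∫ₛᵗ (N u - N s) du`, so that `W t = W s + (t - s) N s + Y`.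
Expanding `N t = N s + D`, the increment of the process from `s` to `t` becomes
`N s * ((t - s) - D / λ) + (Y - D (D - 1) / (2 λ))`. Both brackets are measurable with respect to
the increments after `s`, which are independent of the past σ-algebra, so conditionally on it they
may be replaced by their means. These vanish: `D` is Poisson with mean `λ (t - s)`, its second
factorial moment is `(λ (t - s))²`, and `E Y = ∫ₛᵗ λ (u - s) du = λ (t - s)² / 2`.
-/

section PoissonMoments

open Real
open scoped Nat

lemma hasSum_poisson_mul_descFactorial (r : ℝ≥0) (k : ℕ) :
    HasSum (fun n : ℕ => exp (-r) * r ^ n / n ! * (n.descFactorial k : ℝ)) ((r : ℝ) ^ k) := by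
  have hzero : ∑ i ∈ Finset.range k, exp (-r) * r ^ i / i ! * (i.descFactorial k : ℝ) = 0 :=
    Finset.sum_eq_zero fun i hi => by
      rw [Nat.descFactorial_eq_zero_iff_lt.mpr (Finset.mem_range.mp hi)]; simp
  rw [← hasSum_nat_add_iff' k, hzero, sub_zero, ← mul_one ((r : ℝ) ^ k)]
  refine ((hasSum_one_poissonMeasure r).mul_left _).congr_fun fun m => ?_
  have hfac : ((m + k)! : ℝ) = m ! * (m + k).descFactorial k := by
    exact_mod_cast (Nat.factorial_mul_descFactorial (Nat.le_add_left k m)).symm.trans (by simp)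
  rw [hfac]
  field_simp
  ring

lemma integrable_poissonMeasure_descFactorial (r : ℝ≥0) (k : ℕ) :
    Integrable (fun n : ℕ => (n.descFactorial k : ℝ)) Po(r) :=
  integrable_poissonMeasure_iff.mpr <| by
    simpa using (hasSum_poisson_mul_descFactorial r k).summable

lemma integral_poissonMeasure_descFactorial (r : ℝ≥0) (k : ℕ) :
    ∫ n, (n.descFactorial k : ℝ) ∂Po(r) = (r : ℝ) ^ k := by
  rw [integral_poissonMeasure]
  simpa using (hasSum_poisson_mul_descFactorial r k).tsum_eq

end PoissonMoments

section RiemannSum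

open Filter Topology

noncomputable def riemannSum (g : ℝ → ℝ) (a b : ℝ) (n : ℕ) : ℝ :=
  ∑ i ∈ Finset.range n, g (a + (b - a) / n * (i + 1)) * ((b - a) / n)

variable {g : ℝ → ℝ} {a b : ℝ}

lemma riemannSum_node_mem_Icc (hab : a ≤ b) {n i : ℕ} (hi : i < n) :
    a + (b - a) / n * (i + 1) ∈ Set.Icc a b := by
  have hn : (0 : ℝ) < n := by exact_mod_cast (Nat.zero_lt_of_lt hi)
  have hi' : (i : ℝ) + 1 ≤ n := by exact_mod_cast hi
  constructor
  · have : 0 ≤ (b - a) / n * (i + 1) := by positivity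
    linarith
  · have : (b - a) / n * (i + 1) ≤ (b - a) / n * n := by gcongr
    rw [div_mul_cancel₀ _ hn.ne'] at this
    linarith

lemma abs_riemannSum_le (hg : MonotoneOn g (Set.Icc a b)) (hab : a ≤ b) (n : ℕ) :
    |riemannSum g a b n| ≤ (b - a) * (|g a| + |g b|) := by
  have hΔ : 0 ≤ (b - a) / n := div_nonneg (sub_nonneg.mpr hab) n.cast_nonneg
  have hterm : ∀ i ∈ Finset.range n,
      |g (a + (b - a) / n * (i + 1)) * ((b - a) / n)| ≤ (|g a| + |g b|) * ((b - a) / n) := by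
    intro i hi
    have hmem := riemannSum_node_mem_Icc hab (Finset.mem_range.mp hi)
    have hbound := abs_le_max_abs_abs (hg ⟨le_rfl, hab⟩ hmem hmem.1)
      (hg hmem ⟨hab, le_rfl⟩ hmem.2)
    rw [abs_mul, abs_of_nonneg hΔ]
    gcongr
    exact hbound.trans (max_le_add_of_nonneg (abs_nonneg _) (abs_nonneg _))
  calc |riemannSum g a b n| ≤ ∑ i ∈ Finset.range n, (|g a| + |g b|) * ((b - a) / n) :=
        (Finset.abs_sum_le_sum_abs _ _).trans (Finset.sum_le_sum hterm)
    _ = (b - a) * (|g a| + |g b|) * (n / n) := by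
      rw [Finset.sum_const, Finset.card_range, nsmul_eq_mul]
      ring
    _ ≤ (b - a) * (|g a| + |g b|) :=
      mul_le_of_le_one_right (by positivity) (div_self_le_one _)

lemma riemannSum_sub_le_integral_le (hg : MonotoneOn g (Set.Icc a b)) (hab : a ≤ b) {n : ℕ}
    (hn : 0 < n) :
    riemannSum g a b n - (g b - g a) * ((b - a) / n) ≤ ∫ u in Set.Ioc a b, g u ∧
    ∫ u in Set.Ioc a b, g u ≤ riemannSum g a b n := by
  rcases hab.eq_or_lt with rfl | hlt
  · simp [riemannSum]
  set Δ := (b - a) / n with hΔ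
  have hΔ0 : 0 < Δ := div_pos (sub_pos.mpr hlt) (by exact_mod_cast hn)
  have hend : a + Δ * (0 + n) = b := by rw [hΔ]; field_simp; ring
  have hscale : ∫ x in (0 : ℝ)..0 + n, g (a + Δ * x) = Δ⁻¹ * ∫ u in Set.Ioc a b, g u := by
    rw [intervalIntegral.integral_comp_add_mul _ hΔ0.ne', hend, mul_zero, add_zero,
      intervalIntegral.integral_of_le hab, smul_eq_mul]
  have hmaps : Set.MapsTo (fun x => a + Δ * x) (Set.Icc 0 (0 + n)) (Set.Icc a b) :=
    fun x hx => ⟨by nlinarith [hx.1], hend ▸ by nlinarith [hx.2]⟩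
  have hmono : MonotoneOn (fun x => g (a + Δ * x)) (Set.Icc 0 (0 + n)) :=
    fun x hx y hy hxy => hg (hmaps hx) (hmaps hy) (by dsimp only; gcongr)
  have hlower := hmono.sum_le_integral
  have hupper := hmono.integral_le_sum
  rw [hscale, le_inv_mul_iff₀ hΔ0] at hlower
  rw [hscale, inv_mul_le_iff₀ hΔ0] at hupper
  have hRS : riemannSum g a b n = Δ * ∑ i ∈ Finset.range n, g (a + Δ * (0 + ↑(i + 1))) := by
    rw [riemannSum, ← hΔ, Finset.mul_sum]
    refine Finset.sum_congr rfl fun i _ => ?_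
    rw [mul_comm]
    push_cast
    ring_nf
  have htel : ∑ i ∈ Finset.range n, g (a + Δ * (0 + ↑(i + 1)))
      - ∑ i ∈ Finset.range n, g (a + Δ * (0 + i)) = g b - g a := by
    rw [← Finset.sum_sub_distrib, Finset.sum_range_sub (fun i => g (a + Δ * (0 + i))), ← hend]
    simp
  constructor <;> nlinarith

lemma tendsto_riemannSum (hg : MonotoneOn g (Set.Icc a b)) (hab : a ≤ b) :
    Tendsto (riemannSum g a b) atTop (𝓝 (∫ u in Set.Ioc a b, g u)) := by
  have hmesh : Tendsto (fun n : ℕ => (b - a) / n) atTop (𝓝 0) :=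
    tendsto_const_nhds.div_atTop tendsto_natCast_atTop_atTop
  have hupper := (hmesh.const_mul (g b - g a)).const_add (∫ u in Set.Ioc a b, g u)
  rw [mul_zero, add_zero] at hupper
  refine tendsto_of_tendsto_of_tendsto_of_le_of_le' tendsto_const_nhds hupper ?_ ?_
  · filter_upwards [eventually_gt_atTop 0] with n hn
    exact (riemannSum_sub_le_integral_le hg hab hn).2
  · filter_upwards [eventually_gt_atTop 0] with n hn
    linarith [(riemannSum_sub_le_integral_le hg hab hn).1]

lemma abs_setIntegral_Ioc_le (hg : MonotoneOn g (Set.Icc a b)) (hab : a ≤ b) :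
    |∫ u in Set.Ioc a b, g u| ≤ (b - a) * (|g a| + |g b|) :=
  le_of_tendsto' (tendsto_riemannSum hg hab).abs (abs_riemannSum_le hg hab)

end RiemannSum

section MonotoneProcess

open Filter

variable {Ω : Type*} {f : ℝ → Ω → ℝ} {a b : ℝ}

lemma measurable_riemannSum {m : MeasurableSpace Ω}
    (hmeas : ∀ u ∈ Set.Icc a b, Measurable[m] (f u)) (hab : a ≤ b) (n : ℕ) :
    Measurable[m] fun ω => riemannSum (f · ω) a b n :=
  Finset.measurable_sum _ fun _ hi =>
    (hmeas _ (riemannSum_node_mem_Icc hab (Finset.mem_range.mp hi))).mul_const _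

lemma stronglyMeasurable_setIntegral_of_monotone {m : MeasurableSpace Ω}
    (hmeas : ∀ u ∈ Set.Icc a b, Measurable[m] (f u)) (hmono : ∀ ω, Monotone (f · ω))
    (hab : a ≤ b) : StronglyMeasurable[m] fun ω => ∫ u in Set.Ioc a b, f u ω :=
  stronglyMeasurable_of_tendsto atTop
    (fun n => (measurable_riemannSum hmeas hab n).stronglyMeasurable)
    (tendsto_pi_nhds.mpr fun ω => tendsto_riemannSum ((hmono ω).monotoneOn _) hab)

variable [MeasurableSpace Ω] {μ : Measure Ω}

lemma integrable_of_monotone_of_mem_Icc (hmeas : ∀ u ∈ Set.Icc a b, Measurable (f u))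
    (hmono : ∀ ω, Monotone (f · ω)) (ha : Integrable (f a) μ) (hb : Integrable (f b) μ)
    {u : ℝ} (hu : u ∈ Set.Icc a b) : Integrable (f u) μ :=
  (ha.abs.add hb.abs).mono' (hmeas u hu).aestronglyMeasurable <| ae_of_all _ fun ω =>
    (abs_le_max_abs_abs (hmono ω hu.1) (hmono ω hu.2)).trans
      (max_le_add_of_nonneg (abs_nonneg _) (abs_nonneg _))

lemma integrable_setIntegral_of_monotone (hmeas : ∀ u ∈ Set.Icc a b, Measurable (f u))
    (hmono : ∀ ω, Monotone (f · ω)) (hab : a ≤ b) (ha : Integrable (f a) μ)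
    (hb : Integrable (f b) μ) : Integrable (fun ω => ∫ u in Set.Ioc a b, f u ω) μ :=
  ((ha.abs.add hb.abs).const_mul (b - a)).mono'
    (stronglyMeasurable_setIntegral_of_monotone hmeas hmono hab).aestronglyMeasurable
    (ae_of_all _ fun ω => abs_setIntegral_Ioc_le ((hmono ω).monotoneOn _) hab)

/-- Proved through Riemann sums, so that no joint measurability in `(u, ω)` is needed. -/
lemma integral_setIntegral_comm_of_monotone (hmeas : ∀ u ∈ Set.Icc a b, Measurable (f u))
    (hmono : ∀ ω, Monotone (f · ω)) (hab : a ≤ b) (ha : Integrable (f a) μ)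
    (hb : Integrable (f b) μ) :
    ∫ ω, (∫ u in Set.Ioc a b, f u ω) ∂μ = ∫ u in Set.Ioc a b, ∫ ω, f u ω ∂μ := by
  have hint : ∀ u ∈ Set.Icc a b, Integrable (f u) μ :=
    fun _ hu => integrable_of_monotone_of_mem_Icc hmeas hmono ha hb hu
  have hmean : MonotoneOn (fun u => ∫ ω, f u ω ∂μ) (Set.Icc a b) :=
    fun u hu v hv huv => integral_mono (hint u hu) (hint v hv) fun ω => hmono ω huv
  have hsum (n : ℕ) : ∫ ω, riemannSum (f · ω) a b n ∂μ
      = riemannSum (fun u => ∫ ω, f u ω ∂μ) a b n := by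
    simp only [riemannSum, ← integral_mul_const]
    refine integral_finsetSum _ fun i hi => ?_
    exact (hint _ (riemannSum_node_mem_Icc hab (Finset.mem_range.mp hi))).mul_const _
  have hlim := tendsto_integral_of_dominated_convergence (μ := μ)
    (F := fun n ω => riemannSum (f · ω) a b n) (fun ω => (b - a) * (|f a ω| + |f b ω|))
    (fun n => (measurable_riemannSum hmeas hab n).aestronglyMeasurable)
    ((ha.abs.add hb.abs).const_mul (b - a))
    (fun n => ae_of_all _ fun ω => abs_riemannSum_le ((hmono ω).monotoneOn _) hab n)
    (ae_of_all _ fun ω => tendsto_riemannSum ((hmono ω).monotoneOn _) hab)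
  simp only [hsum] at hlim
  exact tendsto_nhds_unique hlim (tendsto_riemannSum hmean hab)

end MonotoneProcess

section Independence

variable {Ω : Type*} {m : MeasurableSpace Ω} {μ : Measure Ω}

lemma ProbabilityTheory.iIndepFun.indepFun_pi_finsetSum {ι α γ β : Type*} [AddCommMonoid β]
    [MeasurableSpace β] [MeasurableAdd₂ β] {X : ι → Ω → β} (hX : iIndepFun X μ)
    (hmeas : ∀ i, Measurable (X i))
    {S T : Finset ι} (hST : Disjoint S T) {A : α → Finset ι} {B : γ → Finset ι}
    (hA : ∀ r, A r ⊆ S) (hB : ∀ u, B u ⊆ T) :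
    IndepFun (fun ω r => ∑ i ∈ A r, X i ω) (fun ω u => ∑ i ∈ B u, X i ω) μ := by
  have hA' : (fun ω r => ∑ i ∈ A r, X i ω)
      = (fun (v : S → β) r => ∑ i ∈ (A r).attach, v ⟨i, hA r i.2⟩) ∘ fun ω (i : S) => X i ω := by
    funext ω r
    exact (Finset.sum_attach _ _).symm
  have hB' : (fun ω u => ∑ i ∈ B u, X i ω)
      = (fun (v : T → β) u => ∑ i ∈ (B u).attach, v ⟨i, hB u i.2⟩) ∘ fun ω (i : T) => X i ω := by
    funext ω u
    exact (Finset.sum_attach _ _).symm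
  rw [hA', hB']
  exact (hX.indepFun_finset S T hST hmeas).comp
    (measurable_pi_lambda _ fun r => Finset.measurable_sum _ fun _ _ => measurable_pi_apply _)
    (measurable_pi_lambda _ fun u => Finset.measurable_sum _ fun _ _ => measurable_pi_apply _)

lemma indep_iSup_comap_of_indepFun_finset [IsZeroOrProbabilityMeasure μ] {ι κ β γ : Type*}
    [mβ : MeasurableSpace β] [mγ : MeasurableSpace γ] {X : ι → Ω → β} {Y : κ → Ω → γ}
    (hX : ∀ i, Measurable (X i)) (hY : ∀ j, Measurable (Y j))
    (h : ∀ (F : Finset ι) (G : Finset κ),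
      IndepFun (fun ω (i : F) => X i ω) (fun ω (j : G) => Y j ω) μ) :
    Indep (⨆ i, mβ.comap (X i)) (⨆ j, mγ.comap (Y j)) μ := by
  have hfin (F : Finset ι) (G : Finset κ) :
      Indep (⨆ i ∈ F, mβ.comap (X i)) (⨆ j ∈ G, mγ.comap (Y j)) μ :=
    indep_of_indep_of_le_left (indep_of_indep_of_le_right (h F G)
      (iSup₂_le fun j hj => MeasurableSpace.comap_le_comap_pi (g := fun j : G => Y j) ⟨j, hj⟩))
      (iSup₂_le fun i hi => MeasurableSpace.comap_le_comap_pi (g := fun i : F => X i) ⟨i, hi⟩)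
  have hleX (F : Finset ι) : ⨆ i ∈ F, mβ.comap (X i) ≤ m := iSup₂_le fun i _ => (hX i).comap_le
  have hleY (G : Finset κ) : ⨆ j ∈ G, mγ.comap (Y j) ≤ m := iSup₂_le fun j _ => (hY j).comap_le
  rw [iSup_eq_iSup_finset fun i => mβ.comap (X i), iSup_eq_iSup_finset fun j => mγ.comap (Y j)]
  refine indep_iSup_of_directed_le (fun F => ?_) hleX (iSup_le hleY)
    (Monotone.directed_le fun _ _ hFF' => biSup_mono fun _ hi => Finset.mem_of_subset hFF' hi)
  exact (indep_iSup_of_directed_le (fun G => (hfin F G).symm) hleY (hleX F)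
    (Monotone.directed_le fun _ _ hGG' => biSup_mono fun _ hj => Finset.mem_of_subset hGG' hj)).symm

lemma Finset.exists_monotone_enumeration {α : Type*} [LinearOrder α] {C : Finset α}
    (hC : C.Nonempty) : ∃ t : ℕ → α, Monotone t ∧ ∀ c ∈ C, ∃ k < C.card, t k = c := by
  have hcard : 0 < C.card := hC.card_pos
  let e := C.orderEmbOfFin rfl
  refine ⟨fun k => e ⟨min k (C.card - 1), by omega⟩, fun k l hkl => e.monotone ?_, fun c hc => ?_⟩
  · simp only [Fin.mk_le_mk]
    omega
  · obtain ⟨k, rfl⟩ : c ∈ Set.range e := by rwa [Finset.range_orderEmbOfFin]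
    refine ⟨k, k.isLt, ?_⟩
    simp only
    congr
    omega

lemma condExp_add_mul_add_of_indep {m₁ m₂ : MeasurableSpace Ω} [IsProbabilityMeasure μ]
    (hle₁ : m₁ ≤ m) (hle₂ : m₂ ≤ m) (hind : Indep m₁ m₂ μ) {X Y H G : Ω → ℝ}
    (hX : StronglyMeasurable[m₁] X) (hXi : Integrable X μ)
    (hY : StronglyMeasurable[m₁] Y) (hYi : Integrable Y μ)
    (hH : StronglyMeasurable[m₂] H) (hHi : Integrable H μ)
    (hG : StronglyMeasurable[m₂] G) (hGi : Integrable G μ) :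
    μ[X + Y * H + G | m₁] =ᵐ[μ] fun ω => X ω + Y ω * ∫ x, H x ∂μ + ∫ x, G x ∂μ := by
  have hYH : Integrable (Y * H) μ := by
    refine IndepFun.integrable_mul ?_ hYi hHi
    exact indep_of_indep_of_le_left (indep_of_indep_of_le_right hind hH.measurable.comap_le)
      hY.measurable.comap_le
  filter_upwards [condExp_add (hXi.add hYH) hGi m₁, condExp_add hXi hYH m₁,
    condExp_mul_of_stronglyMeasurable_left hY hYH hHi, condExp_indep_eq hle₂ hle₁ hH hind.symm,
    condExp_indep_eq hle₂ hle₁ hG hind.symm] with ω h₁ h₂ h₃ h₄ h₅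
  rw [h₁, Pi.add_apply, h₂, Pi.add_apply, h₃, Pi.mul_apply, h₄, h₅,
    condExp_of_stronglyMeasurable hle₁ hX hXi]

end Independence

namespace PoissonProcess

variable {Ω : Type*} [MeasurableSpace Ω] {P : Measure Ω} {lam : ℝ≥0}
  (pp : PoissonProcess Ω P lam)

lemma sub_eq_sum_Ico {t : ℕ → ℝ≥0} (ht : Monotone t) {k l : ℕ} (hkl : k ≤ l) (ω : Ω) :
    pp.N (t l) ω - pp.N (t k) ω = ∑ i ∈ Finset.Ico k l, (pp.N (t (i + 1)) ω - pp.N (t i) ω) := by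
  rw [Finset.sum_Ico_eq_sum_range]
  have hmono : Monotone fun i => pp.N (t (k + i)) ω := fun i j hij => pp.mono ω (ht (by omega))
  simpa [add_assoc, Nat.add_sub_cancel' hkl] using (Finset.sum_range_tsub hmono (l - k)).symm

lemma iIndepFun_increments {t : ℕ → ℝ≥0} (ht : Monotone t) :
    iIndepFun (fun i ω => pp.N (t (i + 1)) ω - pp.N (t i) ω) P := by
  rw [iIndepFun_iff_finset]
  intro S
  obtain ⟨n, hn⟩ := S.exists_nat_subset_range
  exact (pp.indep n t ht).precomp (g := fun i : S => ⟨i, Finset.mem_range.mp (hn i.2)⟩)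
    fun i j hij => Subtype.ext (congrArg Fin.val hij)

/-- On a common grid through `0`, `s` and all these times, both tuples are sums over disjoint
sets of independent grid increments. -/
lemma indepFun_past_increments (s : ℝ≥0) (F : Finset {r : ℝ≥0 // r ≤ s})
    (G : Finset {u : ℝ≥0 // s ≤ u}) :
    IndepFun (fun ω (r : F) => pp.N r ω) (fun ω (u : G) => pp.N u ω - pp.N s ω) P := by
  classical
  set C : Finset ℝ≥0 := insert 0 (insert s (F.image Subtype.val ∪ G.image Subtype.val))
  have h0 : (0 : ℝ≥0) ∈ C := by simp [C]
  have hs : s ∈ C := by simp [C]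
  have hF (r : F) : (r : ℝ≥0) ∈ C := Finset.mem_insert_of_mem <| Finset.mem_insert_of_mem <|
    Finset.mem_union_left _ (Finset.mem_image_of_mem _ r.2)
  have hG (u : G) : (u : ℝ≥0) ∈ C := Finset.mem_insert_of_mem <| Finset.mem_insert_of_mem <|
    Finset.mem_union_right _ (Finset.mem_image_of_mem _ u.2)
  obtain ⟨t, ht, henum⟩ := Finset.exists_monotone_enumeration ⟨0, h0⟩
  choose! j hjC htj using henum
  have hj_mono {c d : ℝ≥0} (hc : c ∈ C) (hd : d ∈ C) (hcd : c ≤ d) : j c ≤ j d := by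
    rcases hcd.eq_or_lt with rfl | hlt
    · exact le_rfl
    · exact (ht.reflect_lt (by rwa [htj c hc, htj d hd])).le
  have hsum {c d : ℝ≥0} (hc : c ∈ C) (hd : d ∈ C) (hcd : c ≤ d) (ω : Ω) :
      pp.N d ω - pp.N c ω = ∑ i ∈ Finset.Ico (j c) (j d), (pp.N (t (i + 1)) ω - pp.N (t i) ω) := by
    rw [← pp.sub_eq_sum_Ico ht (hj_mono hc hd hcd), htj c hc, htj d hd]
  have key := (pp.iIndepFun_increments ht).indepFun_pi_finsetSum
    (fun i => (pp.measurable_N _).sub (pp.measurable_N _))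
    (Finset.disjoint_left.mpr fun i hi hi' =>
      (Finset.mem_Ico.mp hi').1.not_gt (Finset.mem_range.mp hi))
    (A := fun r : F => Finset.Ico (j 0) (j r)) (B := fun u : G => Finset.Ico (j s) (j u))
    (fun r => Finset.range_eq_Ico _ ▸
      Finset.Ico_subset_Ico (Nat.zero_le _) (hj_mono (hF r) hs r.1.2))
    (fun u => Finset.Ico_subset_Ico_right (hjC u (hG u)).le)
  convert key using 1
  · funext ω r
    rw [← hsum h0 (hF r) zero_le, pp.init, Nat.sub_zero]
  · funext ω u
    exact hsum hs (hG u) u.1.2 ω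

abbrev future (s : ℝ≥0) : MeasurableSpace Ω :=
  ⨆ u : {u : ℝ≥0 // s ≤ u}, MeasurableSpace.comap (fun ω => pp.N u ω - pp.N s ω) inferInstance

lemma future_le (s : ℝ≥0) : pp.future s ≤ ‹MeasurableSpace Ω› :=
  iSup_le fun u => ((pp.measurable_N u).sub (pp.measurable_N s)).comap_le

lemma measurable_N_filtration {v t : ℝ≥0} (hvt : v ≤ t) :
    Measurable[pp.filtration t] fun ω => (pp.N v ω : ℝ) :=
  Measurable.of_discrete.comp <| Measurable.of_comap_le <| le_iSup₂ (f := fun j (_ : j ≤ t) =>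
    MeasurableSpace.comap (pp.N j) inferInstance) v hvt

lemma measurable_increment_future {s u : ℝ≥0} (hsu : s ≤ u) :
    Measurable[pp.future s] fun ω => pp.N u ω - pp.N s ω :=
  Measurable.of_comap_le <| le_iSup (fun u : {u : ℝ≥0 // s ≤ u} =>
    MeasurableSpace.comap (fun ω => pp.N u ω - pp.N s ω) inferInstance) ⟨u, hsu⟩

lemma indep_filtration_future [IsProbabilityMeasure P] (s : ℝ≥0) :
    Indep (pp.filtration s) (pp.future s) P := by
  have hpast : (pp.filtration s : MeasurableSpace Ω)
      = ⨆ r : {r : ℝ≥0 // r ≤ s}, MeasurableSpace.comap (pp.N r) inferInstance :=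
    iSup_subtype'
  rw [hpast]
  exact indep_iSup_comap_of_indepFun_finset (fun r => pp.measurable_N r)
    (fun u => (pp.measurable_N u).sub (pp.measurable_N s)) (pp.indepFun_past_increments s)

lemma hasLaw_increment {s t : ℝ≥0} (hst : s ≤ t) :
    HasLaw (fun ω => pp.N t ω - pp.N s ω) Po(lam * (t - s)) P :=
  ⟨((pp.measurable_N t).sub (pp.measurable_N s)).aemeasurable, pp.stationary s t hst⟩

lemma integrable_descFactorial_increment {s t : ℝ≥0} (hst : s ≤ t) (k : ℕ) :
    Integrable (fun ω => ((pp.N t ω - pp.N s ω).descFactorial k : ℝ)) P := by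
  have h := integrable_poissonMeasure_descFactorial (lam * (t - s)) k
  rw [← (pp.hasLaw_increment hst).map_eq] at h
  exact (integrable_map_measure .of_discrete (pp.hasLaw_increment hst).aemeasurable).mp h

lemma integral_descFactorial_increment {s t : ℝ≥0} (hst : s ≤ t) (k : ℕ) :
    ∫ ω, ((pp.N t ω - pp.N s ω).descFactorial k : ℝ) ∂P = ((lam : ℝ) * (t - s)) ^ k := by
  have hrate : ((lam * (t - s) : ℝ≥0) : ℝ) = lam * ((t : ℝ) - s) := by
    rw [NNReal.coe_mul, NNReal.coe_sub hst]
  rw [← hrate, ← integral_poissonMeasure_descFactorial,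
    ← (pp.hasLaw_increment hst).integral_comp .of_discrete]
  rfl

lemma integrable_cast_increment {s t : ℝ≥0} (hst : s ≤ t) :
    Integrable (fun ω => ((pp.N t ω - pp.N s ω : ℕ) : ℝ)) P := by
  simpa using pp.integrable_descFactorial_increment hst 1

lemma integral_cast_increment {s t : ℝ≥0} (hst : s ≤ t) :
    ∫ ω, ((pp.N t ω - pp.N s ω : ℕ) : ℝ) ∂P = lam * ((t : ℝ) - s) := by
  simpa using pp.integral_descFactorial_increment hst 1

lemma integrable_cast_N (t : ℝ≥0) : Integrable (fun ω => (pp.N t ω : ℝ)) P := by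
  simpa [pp.init] using pp.integrable_cast_increment (zero_le : (0 : ℝ≥0) ≤ t)

lemma integrable_cast_N_sq (t : ℝ≥0) : Integrable (fun ω => (pp.N t ω : ℝ) ^ 2) P := by
  have h := (pp.integrable_descFactorial_increment (zero_le : (0 : ℝ≥0) ≤ t) 2).add
    (pp.integrable_cast_N t)
  refine h.congr (ae_of_all _ fun ω => ?_)
  simp only [Pi.add_apply, pp.init, Nat.sub_zero, Nat.cast_descFactorial_two]
  ring

lemma measurable_cast_N (t : ℝ≥0) : Measurable fun ω => (pp.N t ω : ℝ) :=
  Measurable.of_discrete.comp (pp.measurable_N t)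

lemma cast_N_sub {s v : ℝ≥0} (hsv : s ≤ v) :
    (fun ω => (pp.N v ω : ℝ) - pp.N s ω) = fun ω => ((pp.N v ω - pp.N s ω : ℕ) : ℝ) :=
  funext fun ω => (Nat.cast_sub (pp.mono ω hsv)).symm

lemma monotone_path (ω : Ω) : Monotone fun u : ℝ => (pp.N u.toNNReal ω : ℝ) :=
  fun _ _ huv => Nat.cast_le.mpr (pp.mono ω (Real.toNNReal_mono huv))

lemma W_sub_W_sub_eq_setIntegral (s t : ℝ≥0) (hst : s ≤ t) (ω : Ω) :
    pp.W t ω - pp.W s ω - pp.N s ω * ((t : ℝ) - s)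
      = ∫ u in Set.Ioc (s : ℝ) t, ((pp.N u.toNNReal ω : ℝ) - pp.N s ω) := by
  have hint {a b : ℝ} : IntervalIntegrable (fun u : ℝ => (pp.N u.toNNReal ω : ℝ)) volume a b :=
    (pp.monotone_path ω).intervalIntegrable
  rw [W, W, ← intervalIntegral.integral_of_le t.coe_nonneg,
    ← intervalIntegral.integral_of_le s.coe_nonneg,
    ← intervalIntegral.integral_of_le (NNReal.coe_le_coe.mpr hst),
    intervalIntegral.integral_interval_sub_left hint hint,
    intervalIntegral.integral_sub hint intervalIntegrable_const, intervalIntegral.integral_const,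
    smul_eq_mul]
  ring

lemma stronglyMeasurable_W (t : ℝ≥0) : StronglyMeasurable[pp.filtration t] (pp.W t) :=
  stronglyMeasurable_setIntegral_of_monotone
    (fun _ hu => pp.measurable_N_filtration (Real.toNNReal_le_iff_le_coe.mpr hu.2))
    pp.monotone_path t.coe_nonneg

lemma integrable_W (t : ℝ≥0) : Integrable (pp.W t) P :=
  integrable_setIntegral_of_monotone (fun _ _ => pp.measurable_cast_N _)
    pp.monotone_path t.coe_nonneg (by simpa using pp.integrable_cast_N 0)
    (by simpa using pp.integrable_cast_N t)

lemma stronglyMeasurable_setIntegral_sub {s t : ℝ≥0} (hst : s ≤ t) :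
    StronglyMeasurable[pp.future s]
      fun ω => ∫ u in Set.Ioc (s : ℝ) t, ((pp.N u.toNNReal ω : ℝ) - pp.N s ω) := by
  refine stronglyMeasurable_setIntegral_of_monotone (fun u hu => ?_)
    (fun ω _ _ huv => sub_le_sub_right (pp.monotone_path ω huv) _) (NNReal.coe_le_coe.mpr hst)
  have hsu : s ≤ u.toNNReal := by simpa using Real.toNNReal_mono hu.1
  rw [pp.cast_N_sub hsu]
  exact Measurable.of_discrete.comp (pp.measurable_increment_future hsu)

lemma integrable_setIntegral_sub {s t : ℝ≥0} (hst : s ≤ t) :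
    Integrable (fun ω => ∫ u in Set.Ioc (s : ℝ) t, ((pp.N u.toNNReal ω : ℝ) - pp.N s ω)) P :=
  integrable_setIntegral_of_monotone (f := fun u ω => (pp.N u.toNNReal ω : ℝ) - pp.N s ω)
    (fun _ _ => (pp.measurable_cast_N _).sub (pp.measurable_cast_N s))
    (fun ω _ _ huv => sub_le_sub_right (pp.monotone_path ω huv) _) (NNReal.coe_le_coe.mpr hst)
    (by simp)
    (by simp only [Real.toNNReal_coe]; exact (pp.integrable_cast_N t).sub (pp.integrable_cast_N s))

lemma integral_setIntegral_sub {s t : ℝ≥0} (hst : s ≤ t) :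
    ∫ ω, (∫ u in Set.Ioc (s : ℝ) t, ((pp.N u.toNNReal ω : ℝ) - pp.N s ω)) ∂P
      = lam * ((t : ℝ) - s) ^ 2 / 2 := by
  rw [integral_setIntegral_comm_of_monotone (f := fun u ω => (pp.N u.toNNReal ω : ℝ) - pp.N s ω)
    (fun _ _ => (pp.measurable_cast_N _).sub (pp.measurable_cast_N s))
    (fun ω _ _ huv => sub_le_sub_right (pp.monotone_path ω huv) _) (NNReal.coe_le_coe.mpr hst)
    (by simp)
    (by simp only [Real.toNNReal_coe]; exact (pp.integrable_cast_N t).sub (pp.integrable_cast_N s))]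
  have hmean : ∀ u ∈ Set.Ioc (s : ℝ) t,
      ∫ ω, ((pp.N u.toNNReal ω : ℝ) - pp.N s ω) ∂P = lam * (u - s) := by
    intro u hu
    have hsu : s ≤ u.toNNReal := by simpa using Real.toNNReal_mono hu.1.le
    rw [pp.cast_N_sub hsu, pp.integral_cast_increment hsu,
      Real.coe_toNNReal _ (s.coe_nonneg.trans hu.1.le)]
  rw [setIntegral_congr_fun measurableSet_Ioc hmean,
    ← intervalIntegral.integral_of_le (NNReal.coe_le_coe.mpr hst),
    intervalIntegral.integral_const_mul, intervalIntegral.integral_comp_sub_right (fun x => x),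
    integral_id]
  ring

noncomputable def compensatedW (t : ℝ≥0) (ω : Ω) : ℝ :=
  pp.W t ω - (pp.N t ω : ℝ) ^ 2 / (2 * lam) + (pp.N t ω : ℝ) / (2 * lam)

lemma stronglyAdapted_compensatedW : StronglyAdapted pp.filtration pp.compensatedW := fun t =>
  have hN := pp.measurable_N_filtration (le_refl t)
  ((pp.stronglyMeasurable_W t).sub ((hN.pow_const 2).div_const _).stronglyMeasurable).add
    (hN.div_const _).stronglyMeasurable

lemma integrable_compensatedW (t : ℝ≥0) : Integrable (pp.compensatedW t) P :=
  ((pp.integrable_W t).sub ((pp.integrable_cast_N_sq t).div_const _)).add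
    ((pp.integrable_cast_N t).div_const _)

lemma compensatedW_eq_add_mul_add (hlam : (lam : ℝ) ≠ 0) {s t : ℝ≥0} (hst : s ≤ t) :
    pp.compensatedW t = pp.compensatedW s
      + (fun ω => (pp.N s ω : ℝ)) * (fun ω => (t : ℝ) - s - ((pp.N t ω - pp.N s ω : ℕ) : ℝ) / lam)
      + fun ω => (∫ u in Set.Ioc (s : ℝ) t, ((pp.N u.toNNReal ω : ℝ) - pp.N s ω))
          - ((pp.N t ω - pp.N s ω).descFactorial 2 : ℝ) / (2 * lam) := by
  funext ω
  simp only [compensatedW, Pi.add_apply, Pi.mul_apply]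
  rw [← pp.W_sub_W_sub_eq_setIntegral s t hst, Nat.cast_descFactorial_two,
    Nat.cast_sub (pp.mono ω hst)]
  field_simp
  ring

lemma stronglyMeasurable_sub_increment_div {s t : ℝ≥0} (hst : s ≤ t) :
    StronglyMeasurable[pp.future s]
      fun ω => (t : ℝ) - s - ((pp.N t ω - pp.N s ω : ℕ) : ℝ) / lam :=
  (measurable_const.sub ((Measurable.of_discrete.comp
    (pp.measurable_increment_future hst)).div_const _)).stronglyMeasurable

lemma integrable_sub_increment_div [IsFiniteMeasure P] {s t : ℝ≥0} (hst : s ≤ t) :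
    Integrable (fun ω => (t : ℝ) - s - ((pp.N t ω - pp.N s ω : ℕ) : ℝ) / lam) P :=
  (integrable_const _).sub ((pp.integrable_cast_increment hst).div_const _)

lemma integral_sub_increment_div [IsProbabilityMeasure P] (hlam : (lam : ℝ) ≠ 0) {s t : ℝ≥0}
    (hst : s ≤ t) : ∫ ω, ((t : ℝ) - s - ((pp.N t ω - pp.N s ω : ℕ) : ℝ) / lam) ∂P = 0 := by
  rw [integral_sub (integrable_const _) ((pp.integrable_cast_increment hst).div_const _),
    integral_const, integral_div, pp.integral_cast_increment hst]
  field_simp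
  simp

lemma stronglyMeasurable_setIntegral_sub_descFactorial {s t : ℝ≥0} (hst : s ≤ t) :
    StronglyMeasurable[pp.future s]
      fun ω => (∫ u in Set.Ioc (s : ℝ) t, ((pp.N u.toNNReal ω : ℝ) - pp.N s ω))
        - ((pp.N t ω - pp.N s ω).descFactorial 2 : ℝ) / (2 * lam) :=
  (pp.stronglyMeasurable_setIntegral_sub hst).sub
    (((Measurable.of_discrete (f := fun n : ℕ => (n.descFactorial 2 : ℝ))).comp
      (pp.measurable_increment_future hst)).div_const _).stronglyMeasurable

lemma integrable_setIntegral_sub_descFactorial {s t : ℝ≥0} (hst : s ≤ t) :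
    Integrable (fun ω => (∫ u in Set.Ioc (s : ℝ) t, ((pp.N u.toNNReal ω : ℝ) - pp.N s ω))
      - ((pp.N t ω - pp.N s ω).descFactorial 2 : ℝ) / (2 * lam)) P :=
  (pp.integrable_setIntegral_sub hst).sub
    ((pp.integrable_descFactorial_increment hst 2).div_const _)

lemma integral_setIntegral_sub_descFactorial {s t : ℝ≥0} (hst : s ≤ t) :
    ∫ ω, ((∫ u in Set.Ioc (s : ℝ) t, ((pp.N u.toNNReal ω : ℝ) - pp.N s ω))
      - ((pp.N t ω - pp.N s ω).descFactorial 2 : ℝ) / (2 * lam)) ∂P = 0 := by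
  rw [integral_sub (pp.integrable_setIntegral_sub hst)
    ((pp.integrable_descFactorial_increment hst 2).div_const _), integral_div,
    pp.integral_setIntegral_sub hst, pp.integral_descFactorial_increment hst 2]
  field_simp
  ring

end PoissonProcess

/-- For a Poisson process `N` with rate `λ > 0`, the process
`W(t) - N(t)²/(2λ) + N(t)/(2λ)`, where `W(t) = ∫₀ᵗ N(u) du`, is a martingale with respect
to the natural filtration of `N`. -/
theorem stmt10 {Ω : Type*} [MeasurableSpace Ω] (P : Measure Ω) [IsProbabilityMeasure P]
    (lam : ℝ≥0) (hlam : 0 < lam) (pp : PoissonProcess Ω P lam) :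
    Martingale
      (fun (t : ℝ≥0) (ω : Ω) =>
        pp.W t ω - (pp.N t ω : ℝ) ^ 2 / (2 * lam) + (pp.N t ω : ℝ) / (2 * lam))
      pp.filtration P := by
  change Martingale pp.compensatedW pp.filtration P
  have hlam0 : (lam : ℝ) ≠ 0 := by exact_mod_cast hlam.ne'
  refine ⟨pp.stronglyAdapted_compensatedW, fun s t hst => ?_⟩
  rw [pp.compensatedW_eq_add_mul_add hlam0 hst]
  refine (condExp_add_mul_add_of_indep (pp.filtration.le s) (pp.future_le s)
    (pp.indep_filtration_future s) (pp.stronglyAdapted_compensatedW s)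
    (pp.integrable_compensatedW s) (pp.measurable_N_filtration le_rfl).stronglyMeasurable
    (pp.integrable_cast_N s) (pp.stronglyMeasurable_sub_increment_div hst)
    (pp.integrable_sub_increment_div hst) (pp.stronglyMeasurable_setIntegral_sub_descFactorial hst)
    (pp.integrable_setIntegral_sub_descFactorial hst)).trans ?_
  rw [pp.integral_sub_increment_div hlam0 hst, pp.integral_setIntegral_sub_descFactorial hst]
  simp only [mul_zero, add_zero]
  rfl
end

section
/- Let N(t) be a Poisson process with rate λ, let q be a positive integer, T > 0, and let τ_q be the first time N reaches q. Then E[∫₀^{τ_q ∧ T} N(t) dt] = E[Y_q(Y_q - 1)]/(2λ), where Y_q = min(Y, q) and Y ~ Poisson(λT). -/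
/-!
Off the null event on which `N` never reaches `q` (there `hit q` is the junk value `sInf ∅ = 0`;
this event is null because `P (N t < q) → 0` as `t → ∞`), the integrand
`N u · 1{u ≤ τ_q ∧ T}` agrees on `(0, T]` with `N u · 1{N u < q}` except at `u = τ_q`.
By Fubini the left side becomes `∫₀ᵀ ∑_{n<q} n p_n(λu) du`. Since `p_n' = p_{n-1} - p_n`,
summation by parts shows that `G(x) = E[Y_q (Y_q - 1)]` for `Y ~ Poisson(x)`, written as
`q(q-1) + ∑_{n<q} (n(n-1) - q(q-1)) p_n(x)`, has derivative `2 ∑_{n<q} n p_n(x)` and `G 0 = 0`.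
-/

open MeasureTheory ProbabilityTheory
open scoped NNReal

/-- The first hitting time of level `q` by the process (the `q`-th arrival time). -/
noncomputable def PoissonProcess.hit {Ω : Type*} [MeasurableSpace Ω]
    {P : Measure Ω} {lam : ℝ≥0} (pp : PoissonProcess Ω P lam) (q : ℕ) (ω : Ω) : ℝ≥0 :=
  sInf {t : ℝ≥0 | q ≤ pp.N t ω}

open Filter Topology Finset Real
open scoped Nat

/-- `poissonPMFReal` with a real parameter, so that it can be differentiated in the rate. -/
noncomputable def poissonWeight (x : ℝ) (n : ℕ) : ℝ := exp (-x) * x ^ n / n !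

lemma continuous_poissonWeight (n : ℕ) : Continuous (poissonWeight · n) := by
  unfold poissonWeight; fun_prop

lemma poissonWeight_zero_left (n : ℕ) : poissonWeight 0 n = if n = 0 then 1 else 0 := by
  rcases n with _ | n <;> simp [poissonWeight]

lemma hasDerivAt_poissonWeight_zero (x : ℝ) :
    HasDerivAt (poissonWeight · 0) (-poissonWeight x 0) x := by
  convert (hasDerivAt_neg x).exp using 1
  · ext y; simp [poissonWeight]
  · simp [poissonWeight]

lemma hasDerivAt_poissonWeight_succ (n : ℕ) (x : ℝ) :
    HasDerivAt (poissonWeight · (n + 1)) (poissonWeight x n - poissonWeight x (n + 1)) x := by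
  have h : HasDerivAt (fun y => exp (-y) * y ^ (n + 1) / (n + 1)!)
      ((exp (-x) * -1 * x ^ (n + 1) + exp (-x) * ((n + 1 : ℕ) * x ^ n)) / (n + 1)!) x :=
    (((hasDerivAt_neg x).exp).mul (hasDerivAt_pow (n + 1) x)).div_const _
  refine h.congr_deriv ?_
  simp only [poissonWeight, Nat.factorial_succ, Nat.cast_mul]
  field_simp
  push_cast
  ring

lemma hasDerivAt_sum_range_succ_mul_poissonWeight (a : ℕ → ℝ) (q : ℕ) (x : ℝ) :
    HasDerivAt (fun x => ∑ n ∈ range (q + 1), a n * poissonWeight x n)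
      (∑ n ∈ range (q + 1), (a (n + 1) - a n) * poissonWeight x n
        - a (q + 1) * poissonWeight x q) x := by
  induction q with
  | zero => simpa [sub_mul] using (hasDerivAt_poissonWeight_zero x).const_mul (a 0)
  | succ q ih =>
    simp only [sum_range_succ _ (q + 1)]
    exact (ih.add ((hasDerivAt_poissonWeight_succ q x).const_mul (a (q + 1)))).congr_deriv
      (by ring)

lemma descFactorial_two_succ (n : ℕ) : (n + 1).descFactorial 2 = n.descFactorial 2 + 2 * n := by
  rcases n with _ | n
  · rfl
  · simp only [Nat.succ_descFactorial_succ, Nat.descFactorial_zero, Nat.descFactorial_one]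
    ring

lemma hasDerivAt_sum_range_descFactorial_mul_poissonWeight (q : ℕ) (x : ℝ) :
    HasDerivAt
      (fun x => ∑ n ∈ range q, ((n.descFactorial 2 : ℝ) - q.descFactorial 2) * poissonWeight x n)
      (2 * ∑ n ∈ range q, n * poissonWeight x n) x := by
  rcases q with _ | q
  · simpa using hasDerivAt_const x (0 : ℝ)
  · refine (hasDerivAt_sum_range_succ_mul_poissonWeight
      (fun n => (n.descFactorial 2 : ℝ) - (q + 1).descFactorial 2) q x).congr_deriv ?_
    simp only [sub_self, zero_mul, sub_zero, sub_sub_sub_cancel_right, mul_sum]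
    refine sum_congr rfl fun n _ => ?_
    rw [descFactorial_two_succ]
    push_cast
    ring

lemma integral_sum_range_mul_poissonWeight (q : ℕ) {l T : ℝ} (hl : l ≠ 0) (hT : 0 ≤ T) :
    ∫ u in Set.Ioc 0 T, ∑ n ∈ range q, n * poissonWeight (l * u) n =
      (q.descFactorial 2 + ∑ n ∈ range q,
        ((n.descFactorial 2 : ℝ) - q.descFactorial 2) * poissonWeight (l * T) n) / (2 * l) := by
  set S := fun x => ∑ n ∈ range q, ((n.descFactorial 2 : ℝ) - q.descFactorial 2) * poissonWeight x n
  have hS0 : S 0 = -q.descFactorial 2 := by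
    rcases q with _ | q
    · simp [S]
    · simp [S, sum_range_succ', poissonWeight_zero_left]
  have hderiv : ∀ u, HasDerivAt (fun u => (q.descFactorial 2 + S (l * u)) / (2 * l))
      (∑ n ∈ range q, n * poissonWeight (l * u) n) u := by
    intro u
    have h := (((hasDerivAt_sum_range_descFactorial_mul_poissonWeight q (l * u)).comp u
      ((hasDerivAt_id u).const_mul l)).const_add (q.descFactorial 2 : ℝ)).div_const (2 * l)
    refine h.congr_deriv ?_
    field_simp
  have hcont : Continuous fun u => ∑ n ∈ range q, (n : ℝ) * poissonWeight (l * u) n := by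
    have := continuous_poissonWeight
    fun_prop
  rw [← intervalIntegral.integral_of_le hT,
    intervalIntegral.integral_eq_sub_of_hasDerivAt (fun u _ => hderiv u)
      (hcont.intervalIntegrable 0 T)]
  simp only [mul_zero, hS0, add_neg_cancel, zero_div, sub_zero, S]

lemma tsum_mul_min_eq {p : ℕ → ℝ} (hp : HasSum p 1) (f : ℕ → ℝ) (q : ℕ) :
    ∑' n, p n * f (min n q) = f q + ∑ n ∈ range q, (f n - f q) * p n := by
  have htail : HasSum (fun n => (f (min n q) - f q) * p n) (∑ n ∈ range q, (f n - f q) * p n) := by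
    have hsum : ∑ n ∈ range q, (f n - f q) * p n = ∑ n ∈ range q, (f (min n q) - f q) * p n :=
      sum_congr rfl fun n hn => by rw [min_eq_left (mem_range.mp hn).le]
    rw [hsum]
    exact hasSum_sum_of_ne_finset_zero fun n hn => by
      simp [min_eq_right (not_lt.mp (mem_range.not.mp hn))]
  have h := ((hp.mul_right (f q)).add htail).tsum_eq
  rw [one_mul] at h
  rw [← h]
  exact tsum_congr fun n => by ring

lemma integral_poissonMeasure_ite_lt (r : ℝ≥0) (q : ℕ) (f : ℕ → ℝ) :
    ∫ n, (if n < q then f n else 0) ∂poissonMeasure r = ∑ n ∈ range q, poissonWeight r n * f n := by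
  rw [integral_poissonMeasure, tsum_eq_sum (s := range q) fun n hn => by simp [mem_range.not.mp hn]]
  exact sum_congr rfl fun n hn => by simp [mem_range.mp hn, poissonWeight]

lemma poissonMeasure_Iio (r : ℝ≥0) (q : ℕ) :
    poissonMeasure r (Set.Iio q) = ∑ n ∈ range q, ENNReal.ofReal (poissonWeight r n) := by
  rw [← coe_range, ← sum_measure_singleton]
  simp [poissonMeasure_singleton, poissonWeight]

lemma tendsto_poissonMeasure_Iio_atTop (q : ℕ) :
    Tendsto (fun r : ℝ≥0 => poissonMeasure r (Set.Iio q)) atTop (𝓝 0) := by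
  simp only [poissonMeasure_Iio]
  rw [← sum_const_zero (s := range q)]
  refine tendsto_finsetSum _ fun n _ => ?_
  have h := ((tendsto_pow_mul_exp_neg_atTop_nhds_zero n).div_const (n ! : ℝ)).comp
    (NNReal.tendsto_coe_atTop.mpr tendsto_id)
  simpa [poissonWeight, mul_comm] using ENNReal.tendsto_ofReal h

lemma measurable_uncurry_of_monotone_of_rightConstant {Ω : Type*} [MeasurableSpace Ω]
    {X : ℝ≥0 → Ω → ℕ} (hX : ∀ t, Measurable (X t)) (hmono : ∀ ω, Monotone (X · ω))
    (hright : ∀ ω t, ∃ ε : ℝ≥0, 0 < ε ∧ ∀ s ∈ Set.Ico t (t + ε), X s ω = X t ω) :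
    Measurable fun z : Ω × ℝ≥0 => X z.2 z.1 := by
  obtain ⟨D, hDc, hD⟩ := TopologicalSpace.exists_countable_dense ℝ≥0
  refine measurable_of_Iic fun j => ?_
  have hset : (fun z : Ω × ℝ≥0 => X z.2 z.1) ⁻¹' Set.Iic j =
      ⋃ d ∈ D, {ω | X d ω ≤ j} ×ˢ Set.Iic d := by
    ext ⟨ω, t⟩
    simp only [Set.mem_preimage, Set.mem_Iic, Set.mem_iUnion, Set.mem_prod, exists_prop]
    constructor
    · intro h
      obtain ⟨ε, hε, hconst⟩ := hright ω t
      obtain ⟨d, hdD, htd, hdε⟩ := hD.exists_between (lt_add_of_pos_right t hε)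
      exact ⟨d, hdD, (hconst d ⟨htd.le, hdε⟩).le.trans h, htd.le⟩
    · rintro ⟨d, -, hd, htd⟩
      exact (hmono ω htd).trans hd
  rw [hset]
  exact .biUnion hDc fun d _ => (hX d measurableSet_Iic).prod measurableSet_Iic

namespace PoissonProcess

variable {Ω : Type*} [MeasurableSpace Ω] {P : Measure Ω} {lam : ℝ≥0}
  (pp : PoissonProcess Ω P lam)

lemma map_N (t : ℝ≥0) : P.map (pp.N t) = poissonMeasure (lam * t) := by
  simpa [pp.init] using pp.stationary 0 t bot_le

lemma measurable_uncurry_N : Measurable fun z : Ω × ℝ≥0 => pp.N z.2 z.1 :=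
  measurable_uncurry_of_monotone_of_rightConstant pp.measurable_N pp.mono pp.right_continuous

lemma N_lt_of_lt_hit {q : ℕ} {ω : Ω} {t : ℝ≥0} (ht : t < pp.hit q ω) : pp.N t ω < q :=
  not_le.mp fun h => (csInf_le (OrderBot.bddBelow {t | q ≤ pp.N t ω}) h).not_gt ht

lemma le_N_of_hit_lt {q : ℕ} {ω : Ω} (hω : ∃ s, q ≤ pp.N s ω) {t : ℝ≥0} (ht : pp.hit q ω < t) :
    q ≤ pp.N t ω := by
  obtain ⟨s, hs, hst⟩ : ∃ s ∈ {t | q ≤ pp.N t ω}, s < t := exists_lt_of_csInf_lt hω ht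
  exact le_trans hs (pp.mono ω hst.le)

lemma ae_exists_le_N (hlam : 0 < lam) (q : ℕ) : ∀ᵐ ω ∂P, ∃ t, q ≤ pp.N t ω := by
  rw [ae_iff]
  have hbound : ∀ t, P {ω | ¬∃ t, q ≤ pp.N t ω} ≤ poissonMeasure (lam * t) (Set.Iio q) := by
    intro t
    rw [← pp.map_N, Measure.map_apply (pp.measurable_N t) measurableSet_Iio]
    exact measure_mono fun ω hω => not_le.mp fun h => hω ⟨t, h⟩
  exact le_antisymm (ge_of_tendsto' ((tendsto_poissonMeasure_Iio_atTop q).comp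
    (tendsto_id.const_mul_atTop' hlam)) hbound) bot_le

lemma setIntegral_Ioc_min_hit_eq {q : ℕ} {ω : Ω} (hω : ∃ s, q ≤ pp.N s ω) (T : ℝ≥0) :
    ∫ u in Set.Ioc (0 : ℝ) ((min (pp.hit q ω) T : ℝ≥0) : ℝ), (pp.N u.toNNReal ω : ℝ) =
      ∫ u in Set.Ioc (0 : ℝ) T,
        if pp.N u.toNNReal ω < q then (pp.N u.toNNReal ω : ℝ) else 0 := by
  set σ : ℝ := ((min (pp.hit q ω) T : ℝ≥0) : ℝ) with hσ
  have hσT : σ ≤ T := by exact_mod_cast min_le_right _ _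
  rw [← Set.inter_eq_right.mpr (Set.Ioc_subset_Ioc_right hσT),
    ← setIntegral_indicator measurableSet_Ioc]
  refine setIntegral_congr_ae measurableSet_Ioc
    ((Measure.ae_ne volume (pp.hit q ω : ℝ)).mono fun u hne hu => ?_)
  rcases hne.lt_or_gt with hlt | hgt
  · have hN : pp.N u.toNNReal ω < q :=
      pp.N_lt_of_lt_hit ((Real.toNNReal_lt_iff_lt_coe hu.1.le).mpr hlt)
    have hmem : u ∈ Set.Ioc 0 σ := ⟨hu.1, by rw [hσ, NNReal.coe_min]; exact le_min hlt.le hu.2⟩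
    simp [Set.indicator_of_mem hmem, hN]
  · have hN : q ≤ pp.N u.toNNReal ω := pp.le_N_of_hit_lt hω (Real.lt_toNNReal_iff_coe_lt.mpr hgt)
    have hmem : u ∉ Set.Ioc 0 σ := fun h =>
      (h.2.trans (by rw [hσ, NNReal.coe_min]; exact min_le_left _ _)).not_gt hgt
    simp [Set.indicator_of_notMem hmem, hN.not_gt]

lemma integral_setIntegral_ite_N_lt [IsFiniteMeasure P] (q : ℕ) (T : ℝ≥0) :
    ∫ ω, (∫ u in Set.Ioc (0 : ℝ) T,
        if pp.N u.toNNReal ω < q then (pp.N u.toNNReal ω : ℝ) else 0) ∂P =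
      ∫ u in Set.Ioc (0 : ℝ) T, ∑ n ∈ range q, n * poissonWeight (lam * u) n := by
  set g : ℕ → ℝ := fun n => if n < q then n else 0
  have hmeas : Measurable fun z : Ω × ℝ => g (pp.N z.2.toNNReal z.1) :=
    (Measurable.of_discrete (f := g)).comp
      (pp.measurable_uncurry_N.comp (measurable_fst.prodMk measurable_snd.real_toNNReal))
  have hbound : ∀ n, ‖g n‖ ≤ q := fun n => by
    by_cases hn : n < q
    · simpa [g, hn] using hn.le
    · simp [g, hn]
  have hint : Integrable (Function.uncurry fun ω u => g (pp.N u.toNNReal ω))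
      (P.prod (volume.restrict (Set.Ioc (0 : ℝ) T))) :=
    .of_bound hmeas.aestronglyMeasurable q (ae_of_all _ fun z => hbound _)
  rw [integral_integral_swap hint]
  refine setIntegral_congr_fun measurableSet_Ioc fun u hu => ?_
  rw [← integral_map (pp.measurable_N _).aemeasurable Measurable.of_discrete.aestronglyMeasurable,
    pp.map_N, integral_poissonMeasure_ite_lt]
  simp [Real.coe_toNNReal u hu.1.le, mul_comm]

end PoissonProcess

theorem stmt11_general {Ω : Type*} [MeasurableSpace Ω] (P : Measure Ω) [IsProbabilityMeasure P]
    (lam : ℝ≥0) (hlam : 0 < lam) (pp : PoissonProcess Ω P lam)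
    (q : ℕ) (T : ℝ≥0) :
    (∫ ω, (∫ u in Set.Ioc (0 : ℝ) ((min (pp.hit q ω) T : ℝ≥0) : ℝ),
        (pp.N u.toNNReal ω : ℝ)) ∂P) =
      (∑' n : ℕ, poissonPMFReal (lam * T) n * ((min n q).descFactorial 2 : ℝ)) / (2 * lam) := by
  rw [integral_congr_ae ((pp.ae_exists_le_N hlam q).mono fun ω hω =>
      pp.setIntegral_Ioc_min_hit_eq hω T),
    pp.integral_setIntegral_ite_N_lt,
    integral_sum_range_mul_poissonWeight q (NNReal.coe_ne_zero.mpr hlam.ne') T.coe_nonneg,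
    tsum_mul_min_eq (p := poissonPMFReal (lam * T)) (hasSum_one_poissonMeasure _)
      (fun m => (m.descFactorial 2 : ℝ))]
  simp only [poissonPMFReal, poissonWeight, NNReal.coe_mul]

/-- Let `N` be a Poisson process with rate `λ > 0`, `q` a positive integer, `T > 0`, and
`τ_q` the first hitting time of `q`. Then `E[∫₀^{τ_q ∧ T} N(t) dt] = E[Y_q (Y_q - 1)]/(2λ)`
where `Y_q = min(Y, q)` and `Y ~ Poisson(λT)`. -/
theorem stmt11 {Ω : Type*} [MeasurableSpace Ω] (P : Measure Ω) [IsProbabilityMeasure P]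
    (lam : ℝ≥0) (hlam : 0 < lam) (pp : PoissonProcess Ω P lam)
    (q : ℕ) (hq : 1 ≤ q) (T : ℝ≥0) (hT : 0 < T) :
    (∫ ω, (∫ u in Set.Ioc (0 : ℝ) ((min (pp.hit q ω) T : ℝ≥0) : ℝ),
        (pp.N u.toNNReal ω : ℝ)) ∂P) =
      (∑' n : ℕ, poissonPMFReal (lam * T) n * ((min n q).descFactorial 2 : ℝ)) / (2 * lam) :=
  stmt11_general P lam hlam pp q T
end

section
/- Fix λ > 0 and suppose the quantity policy parameter q, the time policy parameter T, and the hybrid policy parameters (q_H, T_H) give equal expected consolidation cycle lengths: q/λ = T = E[Y_{q_H}]/λ with Y ~ Poisson(λT_H) and Y_{q_H} = min(Y, q_H). Then the average order delays satisfy (q-1)/(2λ) < E[Y_{q_H}(Y_{q_H}-1)]/(2λ·E[Y_{q_H}]) < T/2; i.e., AOD_QP < AOD_HP < AOD_TP. -/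
set_option maxHeartbeats 1000000

namespace S17


lemma pmf_pos {μ : ℝ} (hμ : 0 < μ) (n : ℕ) : 0 < poissonPMF μ n := by
  unfold poissonPMF
  positivity

lemma pmf_summable {μ : ℝ} : Summable (poissonPMF μ) := by
  have h := (Real.summable_pow_div_factorial μ).mul_left (Real.exp (-μ))
  refine h.congr fun n => ?_
  unfold poissonPMF
  ring

lemma pmf_tsum {μ : ℝ} : ∑' n, poissonPMF μ n = 1 := by
  have h1 : ∑' n : ℕ, μ ^ n / n.factorial = Real.exp μ := by
    rw [Real.exp_eq_exp_ℝ, NormedSpace.exp_eq_tsum_div]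
  have : ∑' n, poissonPMF μ n = Real.exp (-μ) * ∑' n : ℕ, μ ^ n / n.factorial := by
    rw [← tsum_mul_left]
    apply tsum_congr
    intro n
    unfold poissonPMF
    ring
  rw [this, h1, ← Real.exp_add]
  simp

lemma pmf_rec {μ : ℝ} (n : ℕ) : μ * poissonPMF μ n = ((n : ℝ) + 1) * poissonPMF μ (n + 1) := by
  unfold poissonPMF
  rw [Nat.factorial_succ]
  push_cast
  have : ((n : ℝ) + 1) ≠ 0 := by positivity
  field_simp
  ring

lemma npmf_summable {μ : ℝ} : Summable (fun n : ℕ => (n : ℝ) * poissonPMF μ n) := by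
  rw [← summable_nat_add_iff 1]
  have : (fun n : ℕ => ((n + 1 : ℕ) : ℝ) * poissonPMF μ (n + 1)) = fun n => μ * poissonPMF μ n := by
    funext n
    push_cast
    rw [← pmf_rec]
  rw [this]
  exact pmf_summable.mul_left μ

lemma npmf_tsum {μ : ℝ} : ∑' n : ℕ, (n : ℝ) * poissonPMF μ n = μ := by
  rw [Summable.tsum_eq_zero_add npmf_summable]
  simp only [Nat.cast_zero, zero_mul, zero_add]
  have : (fun n : ℕ => ((n + 1 : ℕ) : ℝ) * poissonPMF μ (n + 1)) = fun n => μ * poissonPMF μ n := by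
    funext n
    push_cast
    rw [← pmf_rec]
  calc ∑' n : ℕ, ((n + 1 : ℕ) : ℝ) * poissonPMF μ (n + 1)
      = ∑' n : ℕ, μ * poissonPMF μ n := by rw [this]
    _ = μ := by rw [tsum_mul_left, pmf_tsum, mul_one]

lemma sum_layer (p : ℕ → ℝ) (m : ℕ) :
    ∑ j ∈ Finset.range m, ∑ n ∈ Finset.range (j+1), p n
      = ∑ n ∈ Finset.range m, ((m:ℝ) - n) * p n := by
  induction m with
  | zero => simp
  | succ m ih =>
    rw [Finset.sum_range_succ, ih]
    have h : ∀ n ∈ Finset.range (m+1), (((m+1:ℕ):ℝ) - n) * p n = ((m:ℝ) - n) * p n + p n := by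
      intro n _; push_cast; ring
    rw [Finset.sum_congr rfl h, Finset.sum_add_distrib,
      Finset.sum_range_succ (f := fun n => ((m:ℝ) - n) * p n)]
    simp

lemma sum_layer2 (p : ℕ → ℝ) (m : ℕ) :
    ∑ j ∈ Finset.range m, (2*(j:ℝ)+1) * ∑ n ∈ Finset.range (j+1), p n
      = ∑ n ∈ Finset.range m, ((m:ℝ)^2 - (n:ℝ)^2) * p n := by
  induction m with
  | zero => simp
  | succ m ih =>
    rw [Finset.sum_range_succ, ih]
    have h : ∀ n ∈ Finset.range (m+1), (((m+1:ℕ):ℝ)^2 - (n:ℝ)^2) * p n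
        = ((m:ℝ)^2 - (n:ℝ)^2) * p n + (2*(m:ℝ)+1) * p n := by
      intro n _; push_cast; ring
    rw [Finset.sum_congr rfl h, Finset.sum_add_distrib,
      Finset.sum_range_succ (f := fun n => ((m:ℝ)^2 - (n:ℝ)^2) * p n), ← Finset.mul_sum]
    push_cast
    simp

lemma sum_odds (m : ℕ) : ∑ j ∈ Finset.range m, (2*(j:ℝ)+1) = (m:ℝ)^2 := by
  induction m with
  | zero => simp
  | succ m ih => rw [Finset.sum_range_succ, ih]; push_cast; ring

lemma max_sum (a : ℕ → ℝ) (m : ℕ) :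
    ∑ i ∈ Finset.range m, ∑ j ∈ Finset.range m, a (max i j)
      = ∑ j ∈ Finset.range m, (2*(j:ℝ)+1) * a j := by
  induction m with
  | zero => simp
  | succ m ih =>
    have hinner : ∀ i, ∑ j ∈ Finset.range (m+1), a (max i j)
        = (∑ j ∈ Finset.range m, a (max i j)) + a (max i m) := fun i => Finset.sum_range_succ _ m
    rw [Finset.sum_range_succ]
    simp only [hinner]
    have h2 : ∑ i ∈ Finset.range m, (∑ j ∈ Finset.range m, a (max i j) + a (max i m))
        = (∑ i ∈ Finset.range m, ∑ j ∈ Finset.range m, a (max i j)) + m * a m := by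
      rw [Finset.sum_add_distrib]
      congr 1
      rw [Finset.sum_congr rfl fun i hi => by
        rw [max_eq_right (Finset.mem_range.mp hi).le]]
      simp [Finset.sum_const, mul_comm]
    have h3 : ∑ j ∈ Finset.range m, a (max m j) = m * a m := by
      rw [Finset.sum_congr rfl fun j hj => by
        rw [max_eq_left (Finset.mem_range.mp hj).le]]
      simp [Finset.sum_const, mul_comm]
    rw [h2, h3, ih, Finset.sum_range_succ, max_self]
    ring

lemma sq_lt_sum (a : ℕ → ℝ) (h0 : ∀ j, 0 < a j) (h1 : ∀ j, a j < 1) {m : ℕ} (hm : 0 < m) :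
    (∑ j ∈ Finset.range m, a j)^2 < ∑ j ∈ Finset.range m, (2*(j:ℝ)+1) * a j := by
  rw [← max_sum, sq, Finset.sum_mul_sum]
  apply Finset.sum_lt_sum_of_nonempty (Finset.nonempty_range_iff.mpr hm.ne')
  intro i _
  apply Finset.sum_lt_sum_of_nonempty (Finset.nonempty_range_iff.mpr hm.ne')
  intro j _
  rcases le_total i j with h | h
  · rw [max_eq_right h]; exact mul_lt_of_lt_one_left (h0 j) (h1 i)
  · rw [max_eq_left h]; exact mul_lt_of_lt_one_right (h0 i) (h1 j)




end S17

/-- Suppose the quantity policy parameter `q`, the time policy parameter `T`, and the hybrid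
policy parameters `(q_H, T_H)` give equal expected consolidation cycle lengths:
`q/λ = T = E[Y_{q_H}]/λ` where `Y ~ Poisson(λ T_H)` and `Y_{q_H} = min(Y, q_H)`.
Then `AOD_QP < AOD_HP < AOD_TP`, i.e.
`(q-1)/(2λ) < E[Y_{q_H}(Y_{q_H}-1)]/(2λ E[Y_{q_H}]) < T/2`. -/
theorem stmt17 (lam T T_H : ℝ) (hlam : 0 < lam) (hT_H : 0 < T_H)
    (q q_H : ℕ) (hq : 1 ≤ q) (hq_H : 2 ≤ q_H)
    (hQP : (q : ℝ) / lam = T)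
    (hHP : T = (∑' n : ℕ, poissonPMF (lam * T_H) n * (min n q_H : ℝ)) / lam) :
    (q - 1 : ℝ) / (2 * lam) <
        (∑' n : ℕ, poissonPMF (lam * T_H) n * ((min n q_H).descFactorial 2 : ℝ)) /
          (2 * lam * ∑' n : ℕ, poissonPMF (lam * T_H) n * (min n q_H : ℝ)) ∧
      (∑' n : ℕ, poissonPMF (lam * T_H) n * ((min n q_H).descFactorial 2 : ℝ)) /
          (2 * lam * ∑' n : ℕ, poissonPMF (lam * T_H) n * (min n q_H : ℝ)) <
        T / 2 := by
  set μ : ℝ := lam * T_H with hμdef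
  have hμ : 0 < μ := mul_pos hlam hT_H
  set p : ℕ → ℝ := poissonPMF μ with hpdef
  have hp : ∀ n, 0 < p n := S17.pmf_pos hμ
  have hpsum : Summable p := S17.pmf_summable
  have hptot : ∑' n, p n = 1 := S17.pmf_tsum
  have hrec : ∀ n : ℕ, μ * p n = ((n:ℝ)+1) * p (n+1) := fun n => S17.pmf_rec n
  have hnsum : Summable (fun n : ℕ => (n:ℝ) * p n) := S17.npmf_summable
  have hntsum : ∑' n : ℕ, (n:ℝ) * p n = μ := S17.npmf_tsum
  set k := q_H with hkdef
  have hkR : (2:ℝ) ≤ (k:ℝ) := by exact_mod_cast hq_H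
  have hk0 : 0 < k := by omega
  have hk0R : (0:ℝ) < (k:ℝ) := by positivity
  clear_value μ p
  set S1 : ℝ := ∑' n : ℕ, p n * (min (n:ℝ) (k:ℝ)) with hS1def
  set S2 : ℝ := ∑' n : ℕ, p n * ((min n k).descFactorial 2 : ℝ) with hS2def
  set Φ : ℝ := ∑ n ∈ Finset.range k, ((k:ℝ) - n) * p n with hΦdef
  set Ψ : ℝ := ∑ n ∈ Finset.range k, ((k:ℝ)*((k:ℝ)-1) - (n:ℝ)*((n:ℝ)-1)) * p n with hΨdef
  set Pk : ℝ := ∑ n ∈ Finset.range k, p n with hPkdef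
  set M : ℝ := ∑ n ∈ Finset.range k, (n:ℝ) * p n with hMdef
  set Θ : ℝ := ∑ n ∈ Finset.range k, (n:ℝ) * ((k:ℝ) - n) * p n with hΘdef
  -- partial sums are < 1
  have hplt : ∀ m : ℕ, ∑ n ∈ Finset.range m, p n < 1 := by
    intro m
    have h1 : ∑ n ∈ Finset.range (m+1), p n ≤ 1 := by
      rw [← hptot]
      exact Summable.sum_le_tsum _ (fun i _ => (hp i).le) hpsum
    rw [Finset.sum_range_succ] at h1
    have := hp m
    linarith
  -- S1 = k - Φ
  have hr0 : ∀ n ∉ Finset.range k, p n * ((k:ℝ) - min (n:ℝ) (k:ℝ)) = 0 := by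
    intro n hn
    rw [Finset.mem_range, not_lt] at hn
    have : ((k:ℝ) ≤ (n:ℝ)) := by exact_mod_cast hn
    rw [min_eq_right this]
    ring
  have hrsum : Summable (fun n : ℕ => p n * ((k:ℝ) - min (n:ℝ) (k:ℝ))) :=
    summable_of_ne_finset_zero hr0
  have hS1k : S1 = (k:ℝ) - Φ := by
    rw [hS1def]
    calc ∑' n : ℕ, p n * (min (n:ℝ) (k:ℝ))
        = ∑' n : ℕ, ((k:ℝ) * p n - p n * ((k:ℝ) - min (n:ℝ) (k:ℝ))) :=
          tsum_congr fun n => by ring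
      _ = (∑' n : ℕ, (k:ℝ) * p n) - ∑' n : ℕ, p n * ((k:ℝ) - min (n:ℝ) (k:ℝ)) :=
          Summable.tsum_sub (hpsum.mul_left _) hrsum
      _ = (k:ℝ) - Φ := by
          rw [tsum_mul_left, hptot, mul_one, tsum_eq_sum hr0, hΦdef]
          congr 1
          refine Finset.sum_congr rfl fun n hn => ?_
          rw [Finset.mem_range] at hn
          have : ((n:ℝ) ≤ (k:ℝ)) := by exact_mod_cast hn.le
          rw [min_eq_left this]
          ring
  have hs1sum : Summable (fun n : ℕ => p n * (min (n:ℝ) (k:ℝ))) := by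
    refine Summable.of_nonneg_of_le (fun n => ?_) (fun n => ?_) (hpsum.mul_left (k:ℝ))
    · have h0 : (0:ℝ) ≤ (n:ℝ) := by positivity
      have := (hp n).le
      have : (0:ℝ) ≤ min (n:ℝ) (k:ℝ) := le_min h0 hk0R.le
      nlinarith [(hp n).le]
    · have h1 : min (n:ℝ) (k:ℝ) ≤ (k:ℝ) := min_le_right _ _
      calc p n * min (n:ℝ) (k:ℝ) ≤ p n * (k:ℝ) :=
            mul_le_mul_of_nonneg_left h1 (hp n).le
        _ = (k:ℝ) * p n := mul_comm _ _
  -- S2 = k(k-1) - Ψ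
  have hdf : ∀ m : ℕ, ((m.descFactorial 2 : ℕ) : ℝ) = (m:ℝ) * ((m:ℝ) - 1) :=
    fun m => Nat.cast_descFactorial_two ℝ m
  have hr20 : ∀ n ∉ Finset.range k,
      p n * ((k:ℝ)*((k:ℝ)-1) - ((min n k).descFactorial 2 : ℝ)) = 0 := by
    intro n hn
    rw [Finset.mem_range, not_lt] at hn
    rw [min_eq_right hn, hdf]
    ring
  have hr2sum : Summable (fun n : ℕ =>
      p n * ((k:ℝ)*((k:ℝ)-1) - ((min n k).descFactorial 2 : ℝ))) :=
    summable_of_ne_finset_zero hr20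
  have hS2k : S2 = (k:ℝ)*((k:ℝ)-1) - Ψ := by
    rw [hS2def]
    calc ∑' n : ℕ, p n * ((min n k).descFactorial 2 : ℝ)
        = ∑' n : ℕ, ((k:ℝ)*((k:ℝ)-1) * p n
            - p n * ((k:ℝ)*((k:ℝ)-1) - ((min n k).descFactorial 2 : ℝ))) :=
          tsum_congr fun n => by ring
      _ = (∑' n : ℕ, (k:ℝ)*((k:ℝ)-1) * p n)
            - ∑' n : ℕ, p n * ((k:ℝ)*((k:ℝ)-1) - ((min n k).descFactorial 2 : ℝ)) :=
          Summable.tsum_sub (hpsum.mul_left _) hr2sum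
      _ = (k:ℝ)*((k:ℝ)-1) - Ψ := by
          rw [tsum_mul_left, hptot, mul_one, tsum_eq_sum hr20, hΨdef]
          congr 1
          refine Finset.sum_congr rfl fun n hn => ?_
          rw [Finset.mem_range] at hn
          rw [min_eq_left hn.le, hdf]
          ring
  clear_value S1 S2 Φ Ψ Pk M Θ
  -- q = S1
  have hq1 : (q:ℝ) = S1 := by
    have h := hQP.trans hHP
    rw [div_eq_div_iff hlam.ne' hlam.ne'] at h
    exact mul_right_cancel₀ hlam.ne' h
  have hS1pos : 0 < S1 := by
    rw [← hq1]
    have : (1:ℝ) ≤ (q:ℝ) := by exact_mod_cast hq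
    linarith
  -- Stein-type identities
  have hμPk : μ * Pk = M + (k:ℝ) * p k := by
    have h1 : μ * Pk = ∑ n ∈ Finset.range k, (((n:ℕ)+1 : ℕ):ℝ) * p (n+1) := by
      rw [hPkdef, Finset.mul_sum]
      refine Finset.sum_congr rfl fun n _ => ?_
      rw [hrec n]
      push_cast
      ring
    have h2 := Finset.sum_range_succ (fun n : ℕ => (n:ℝ) * p n) k
    have h3 := Finset.sum_range_succ' (fun n : ℕ => (n:ℝ) * p n) k
    simp only [Nat.cast_zero, zero_mul, add_zero] at h3
    rw [h1, ← h3, h2, hMdef]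
  have hΘeq : Θ = μ * Φ - μ * Pk := by
    have hsplit : μ * Φ - μ * Pk = ∑ n ∈ Finset.range k, ((k:ℝ) - 1 - n) * (μ * p n) := by
      rw [hΦdef, hPkdef, Finset.mul_sum, Finset.mul_sum, ← Finset.sum_sub_distrib]
      refine Finset.sum_congr rfl fun n _ => by ring
    have h1 : ∑ n ∈ Finset.range k, ((k:ℝ) - 1 - n) * (μ * p n)
        = ∑ n ∈ Finset.range k, (fun m : ℕ => (m:ℝ) * ((k:ℝ) - m) * p m) (n+1) := by
      refine Finset.sum_congr rfl fun n _ => ?_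
      rw [hrec n]
      push_cast
      ring
    have h2 := Finset.sum_range_succ (fun n : ℕ => (n:ℝ) * ((k:ℝ) - n) * p n) k
    have h3 := Finset.sum_range_succ' (fun n : ℕ => (n:ℝ) * ((k:ℝ) - n) * p n) k
    simp only [Nat.cast_zero, zero_mul, add_zero, sub_self, mul_zero, zero_mul] at h2 h3
    rw [hΘdef, hsplit, h1, ← h3, h2]
  have hΦM : Φ = (k:ℝ) * Pk - M := by
    rw [hΦdef, hPkdef, hMdef, Finset.mul_sum, ← Finset.sum_sub_distrib]
    exact Finset.sum_congr rfl fun n _ => by ring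
  have hI1 : Ψ + Φ - (k:ℝ) * Φ = Θ := by
    rw [hΨdef, hΦdef, hΘdef, Finset.mul_sum, ← Finset.sum_add_distrib, ← Finset.sum_sub_distrib]
    exact Finset.sum_congr rfl fun n _ => by ring
  have hΦ0 : 0 ≤ Φ := by
    rw [hΦdef]
    refine Finset.sum_nonneg fun n hn => ?_
    rw [Finset.mem_range] at hn
    have : (n:ℝ) ≤ (k:ℝ) := by exact_mod_cast hn.le
    nlinarith [(hp n).le]
  have hS1le : S1 ≤ μ := by
    rw [hS1k, ← hntsum]
    rw [hS1k] at hS1def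
    rw [hS1def]
    refine Summable.tsum_le_tsum (fun n => ?_) hs1sum hnsum
    have h1 : min (n:ℝ) (k:ℝ) ≤ (n:ℝ) := min_le_left _ _
    calc p n * min (n:ℝ) (k:ℝ) ≤ p n * (n:ℝ) := mul_le_mul_of_nonneg_left h1 (hp n).le
      _ = (n:ℝ) * p n := mul_comm _ _
  -- upper bound : S2 < S1^2
  have hupper : S2 < S1^2 := by
    rw [hS1k, hS2k]
    have hA : 0 ≤ μ - ((k:ℝ) - Φ) := by rw [← hS1k]; linarith
    have hAΦ : 0 ≤ (μ - ((k:ℝ) - Φ)) * Φ := mul_nonneg hA hΦ0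
    have hPkk : Pk + p k < 1 := by
      have := hplt (k+1)
      rwa [Finset.sum_range_succ, ← hPkdef] at this
    have hδ : 0 < (k:ℝ) * (1 - Pk - p k) := by
      apply mul_pos hk0R
      linarith
    have key : ((k:ℝ)-Φ)^2 - ((k:ℝ)*((k:ℝ)-1) - Ψ)
        = (μ - ((k:ℝ)-Φ))*Φ + (k:ℝ)*(1 - Pk - p k) := by
      linear_combination hΘeq + hI1 - hμPk - hΦM
    linarith [key, hAΦ, hδ]
  -- lower bound : S1^2 < S2 + S1
  set a : ℕ → ℝ := fun j => 1 - ∑ n ∈ Finset.range (j+1), p n with hadef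
  have ha0 : ∀ j, 0 < a j := fun j => by
    have := hplt (j+1)
    simp only [hadef]
    linarith
  have ha1 : ∀ j, a j < 1 := fun j => by
    have hpos : 0 < ∑ n ∈ Finset.range (j+1), p n :=
      Finset.sum_pos (fun n _ => hp n) Finset.nonempty_range_add_one
    simp only [hadef]
    linarith
  have hJ1 : ∑ j ∈ Finset.range k, a j = (k:ℝ) - Φ := by
    simp only [hadef]
    rw [Finset.sum_sub_distrib, Finset.sum_const, Finset.card_range,
      S17.sum_layer p k, hΦdef]
    simp
  have hJ2 : ∑ j ∈ Finset.range k, (2*(j:ℝ)+1) * a j = (k:ℝ)^2 - (Ψ + Φ) := by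
    simp only [hadef]
    have h1 : ∀ j ∈ Finset.range k, (2*(j:ℝ)+1) * (1 - ∑ n ∈ Finset.range (j+1), p n)
        = (2*(j:ℝ)+1) - (2*(j:ℝ)+1) * ∑ n ∈ Finset.range (j+1), p n :=
      fun j _ => by ring
    rw [Finset.sum_congr rfl h1, Finset.sum_sub_distrib, S17.sum_odds, S17.sum_layer2]
    have h2 : Ψ + Φ = ∑ n ∈ Finset.range k, ((k:ℝ)^2 - (n:ℝ)^2) * p n := by
      rw [hΨdef, hΦdef, ← Finset.sum_add_distrib]
      exact Finset.sum_congr rfl fun n _ => by ring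
    rw [h2]
  have hlower : S1^2 < S2 + S1 := by
    have h := S17.sq_lt_sum a ha0 ha1 hk0
    rw [hJ1, hJ2] at h
    rw [hS1k, hS2k]
    nlinarith [h]
  -- conclusion
  have h2lam : (0:ℝ) < 2 * lam := by linarith
  have hden : (0:ℝ) < 2 * lam * S1 := by positivity
  constructor
  · rw [div_lt_div_iff₀ h2lam hden, hq1]
    nlinarith [mul_pos h2lam (show (0:ℝ) < S2 + S1 - S1^2 by linarith)]
  · have hT2 : T / 2 = S1 / (2 * lam) := by
      rw [hHP, div_div]
      ring_nf
    rw [hT2, div_lt_div_iff₀ hden h2lam]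
    nlinarith [mul_pos h2lam (show (0:ℝ) < S1^2 - S2 by linarith)]
end
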